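/- arXiv:1111.3690 — 6 statements merged into one kernel-verified Lean document; each statement's English description precedes it below -/
import Mathlib

section
/- Let P be an n-voter profile of linear orders over a finite candidate set X, let x* ∈ X, and let k ≥ 1. Then x* is a possible cowinner for plurality with respect to the addition of k new candidates (i.e., there exists an extension P' of P to X together with k new candidates such that no candidate's plurality score in P' exceeds that of x*) if and only if k · ntop(P, x*) ≥ Σ_{x ∈ X} max(0, ntop(P, x) − ntop(P, x*)), where ntop(P, x) denotes the number of votes in P ranking x first. -/
/-! Write `s = ntop P x*`. In an extension where `x*` is a cowinner, every candidate scores at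
most `ntop P' x* ≤ s`. Deleting the new candidates moves each vote they head to an original
candidate and changes nothing else, so the total surplus `∑ (ntop P x - s)` of the original
candidates is at most the total score of the `k` new candidates, hence at most `k * s`.

Conversely, give every candidate capacity `s` and scan the votes: a vote whose top candidate
still has capacity is kept, with the new candidates appended at the bottom; otherwise a new
candidate with spare capacity is put on top. Each such demotion uses up one unit of surplus and
one unit of the new candidates' total capacity `k * s`, so spare capacity never runs out, and
`x*` keeps all its `s` votes. -/

namespace PcWNC

abbrev Profile := List (List ℕ)

/-- `v` is a linear-order vote over the candidate set `X`:
a duplicate-free list whose members are exactly the elements of `X`. -/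
def IsVote (X : Finset ℕ) (v : List ℕ) : Prop := v.Nodup ∧ ∀ c, c ∈ v ↔ c ∈ X

/-- `P` is a profile over `X`: every vote is a linear order on `X`. -/
def IsProfile (X : Finset ℕ) (P : Profile) : Prop := ∀ v ∈ P, IsVote X v

/-- Restriction of a profile: delete from each vote the candidates outside `X`. -/
def restrict (X : Finset ℕ) (P : Profile) : Profile :=
  P.map (fun v => v.filter (fun c => decide (c ∈ X)))

/-- `P'` extends `P` (w.r.t. the initial candidate set `X`). -/
def Extends (X : Finset ℕ) (P' P : Profile) : Prop := restrict X P' = P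

/-- Plurality score: number of votes ranking `x` first. -/
def ntop (P : Profile) (x : ℕ) : ℕ := P.countP (fun v => decide (v.head? = some x))

/-- `K`-approval score: number of votes ranking `x` within the top `K` positions. -/
def approval (K : ℕ) (P : Profile) (x : ℕ) : ℕ :=
  P.countP (fun v => decide (x ∈ v.take K))

/-- Number of votes ranking `x` exactly in (1-indexed) position `i`. -/
def nPos (P : Profile) (i : ℕ) (x : ℕ) : ℕ :=
  P.countP (fun v => decide (x ∈ v ∧ v.idxOf x + 1 = i))

/-- Borda score of `x`: total number of candidates ranked below `x` over all votes. -/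
def borda (P : Profile) (x : ℕ) : ℕ :=
  (P.map (fun v => v.countP (fun w => decide (v.idxOf x < v.idxOf w)))).sum

/-- Number of votes ranking `x` above `z`. -/
def nAbove (P : Profile) (x z : ℕ) : ℕ :=
  P.countP (fun v => decide (x ∈ v ∧ z ∈ v ∧ v.idxOf x < v.idxOf z))

/-- Score of `x` under the positional scoring vector `s` (position `i` counted from 0). -/
def score (s : ℕ → ℤ) (P : Profile) (x : ℕ) : ℤ :=
  (P.map (fun v => s (v.idxOf x))).sum

/-- Insert the candidates of `ys` immediately below `x` in the vote `v`. -/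
def insertBelow (x : ℕ) (ys : List ℕ) (v : List ℕ) : List ℕ :=
  v.takeWhile (fun c => decide (c ≠ x)) ++ x :: ys ++
    (v.dropWhile (fun c => decide (c ≠ x))).drop 1

/-- Insert the candidates of `ys` immediately below `x` in every vote of `P`. -/
def insertProfile (x : ℕ) (ys : List ℕ) (P : Profile) : Profile :=
  P.map (insertBelow x ys)

/-- Veto score: number of votes not ranking `x` last. -/
def vetoScore (P : Profile) (x : ℕ) : ℕ :=
  P.countP (fun v => decide (v.getLast? ≠ some x))

lemma exists_finset_disjoint_card_eq {α : Type*} [Infinite α] (X : Finset α) (k : ℕ) :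
    ∃ Y : Finset α, Disjoint X Y ∧ Y.card = k := by
  obtain ⟨Y, hY, hcard⟩ := X.finite_toSet.infinite_compl.exists_subset_card_eq k
  exact ⟨Y, Finset.disjoint_left.2 fun _ hx hy => hY hy hx, hcard⟩

section

variable {X Y : Finset ℕ}

lemma ntop_cons_cons (a : ℕ) (w : List ℕ) (P : Profile) (z : ℕ) :
    ntop ((a :: w) :: P) z = ntop P z + if a = z then 1 else 0 := by
  simp [ntop, List.countP_cons]

lemma IsVote.ne_nil {v : List ℕ} (hv : IsVote X v) (hX : X.Nonempty) : v ≠ [] := by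
  obtain ⟨x, hx⟩ := hX
  exact List.ne_nil_of_mem ((hv.2 x).2 hx)

lemma IsVote.append {u v : List ℕ} (hv : IsVote X v) (hu : IsVote Y u) (hXY : Disjoint X Y) :
    IsVote (X ∪ Y) (v ++ u) := by
  refine ⟨hv.1.append hu.1 fun c hcv hcu => ?_, fun c => by simp [hv.2, hu.2]⟩
  exact Finset.disjoint_left.1 hXY ((hv.2 c).1 hcv) ((hu.2 c).1 hcu)

lemma isVote_toList (Y : Finset ℕ) : IsVote Y Y.toList :=
  ⟨Y.nodup_toList, fun _ => Finset.mem_toList⟩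

lemma isVote_cons_toList_erase {y : ℕ} (hy : y ∈ Y) : IsVote Y (y :: (Y.erase y).toList) := by
  refine ⟨List.nodup_cons.2 ⟨by simp, (Y.erase y).nodup_toList⟩, fun c => ?_⟩
  by_cases hc : c = y <;> simp [hc, hy]

lemma filter_mem_of_isVote {v : List ℕ} (hv : IsVote X v) :
    v.filter (fun c => decide (c ∈ X)) = v :=
  List.filter_eq_self.2 fun c hc => by simpa using (hv.2 c).1 hc

lemma filter_mem_eq_nil_of_isVote {u : List ℕ} (hu : IsVote Y u) (hXY : Disjoint X Y) :
    u.filter (fun c => decide (c ∈ X)) = [] :=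
  List.filter_eq_nil_iff.2 fun c hc => by
    simpa using Finset.disjoint_right.1 hXY ((hu.2 c).1 hc)

lemma sum_ntop_eq_length {P : Profile} (hP : IsProfile X P) (hX : X.Nonempty) :
    ∑ z ∈ X, ntop P z = P.length := by
  induction P with
  | nil => simp [ntop]
  | cons v P ih =>
    obtain ⟨a, w, rfl⟩ := List.exists_cons_of_ne_nil ((hP v List.mem_cons_self).ne_nil hX)
    have ha : a ∈ X := ((hP _ List.mem_cons_self).2 a).1 List.mem_cons_self
    simp only [ntop_cons_cons, Finset.sum_add_distrib, Finset.sum_ite_eq, if_pos ha,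
      ih fun u hu => hP u (List.mem_cons_of_mem _ hu), List.length_cons]

lemma head?_filter_of_head?_eq {α : Type*} {l : List α} {p : α → Bool} {a : α}
    (hl : l.head? = some a) (ha : p a) : (l.filter p).head? = some a := by
  obtain ⟨w, rfl⟩ : ∃ w, l = a :: w := by
    cases l with
    | nil => simp at hl
    | cons b w => simp only [List.head?_cons, Option.some.injEq] at hl; exact ⟨w, hl ▸ rfl⟩
  simp [ha]

lemma ntop_le_ntop_restrict (P' : Profile) {x : ℕ} (hx : x ∈ X) :
    ntop P' x ≤ ntop (restrict X P') x := by
  rw [ntop, ntop, restrict, List.countP_map]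
  refine List.countP_mono_left fun v _ hv => ?_
  simp only [Function.comp_apply, decide_eq_true_eq] at hv ⊢
  exact head?_filter_of_head?_eq hv (by simpa using hx)

theorem sum_tsub_ntop_le_card_mul {P P' : Profile} (hP : IsProfile X P)
    (hP' : IsProfile (X ∪ Y) P') (hext : Extends X P' P) (hXY : Disjoint X Y)
    {x : ℕ} (hx : x ∈ X) (hwin : ∀ z ∈ X ∪ Y, ntop P' z ≤ ntop P' x) :
    ∑ z ∈ X, (ntop P z - ntop P x) ≤ Y.card * ntop P x := by
  subst hext
  set P := restrict X P'
  have hle : ∀ z ∈ X, ntop P' z ≤ ntop P z := fun z hz => ntop_le_ntop_restrict P' hz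
  have hcap : ∀ z ∈ X ∪ Y, ntop P' z ≤ ntop P x := fun z hz => (hwin z hz).trans (hle x hx)
  have htotal : ∑ z ∈ X, ntop P z = ∑ z ∈ X, ntop P' z + ∑ y ∈ Y, ntop P' y := by
    rw [← Finset.sum_union hXY, sum_ntop_eq_length hP ⟨x, hx⟩,
      sum_ntop_eq_length hP' ⟨x, Finset.mem_union_left _ hx⟩]
    exact List.length_map _
  calc ∑ z ∈ X, (ntop P z - ntop P x)
      ≤ ∑ z ∈ X, (ntop P z - ntop P' z) :=
        Finset.sum_le_sum fun z hz => Nat.sub_le_sub_left (hcap z (Finset.mem_union_left _ hz)) _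
    _ = ∑ y ∈ Y, ntop P' y := by rw [Finset.sum_tsub_distrib _ hle]; omega
    _ ≤ ∑ _y ∈ Y, ntop P x := Finset.sum_le_sum fun y hy => hcap y (Finset.mem_union_right _ hy)
    _ = Y.card * ntop P x := by rw [Finset.sum_const, smul_eq_mul]

lemma restrict_cons (v : List ℕ) (P : Profile) :
    restrict X (v :: P) = v.filter (fun c => decide (c ∈ X)) :: restrict X P := rfl

def excess (X : Finset ℕ) (c : ℕ → ℕ) (P : Profile) : ℕ := ∑ x ∈ X, (ntop P x - c x)

lemma excess_cons_cons_of_pos {c : ℕ → ℕ} {a : ℕ} (w : List ℕ) (P : Profile) (hca : 0 < c a) :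
    excess X c ((a :: w) :: P) = excess X (Function.update c a (c a - 1)) P := by
  refine Finset.sum_congr rfl fun x _ => ?_
  by_cases hx : a = x
  · subst hx; rw [ntop_cons_cons, if_pos rfl, Function.update_self]; omega
  · simp [ntop_cons_cons, hx, Function.update_of_ne (Ne.symm hx)]

lemma excess_cons_cons_of_eq_zero {c : ℕ → ℕ} {a : ℕ} (w : List ℕ) (P : Profile) (ha : a ∈ X)
    (hca : c a = 0) : excess X c ((a :: w) :: P) = excess X c P + 1 := by
  have hterm : ∀ x ∈ X,
      ntop ((a :: w) :: P) x - c x = (ntop P x - c x) + if a = x then 1 else 0 := by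
    intro x _
    by_cases hx : a = x
    · subst hx; rw [ntop_cons_cons, if_pos rfl]; omega
    · simp [ntop_cons_cons, hx]
  rw [excess, Finset.sum_congr rfl hterm, Finset.sum_add_distrib, Finset.sum_ite_eq, if_pos ha]
  rfl

lemma excess_update_of_notMem {c : ℕ → ℕ} {y : ℕ} (hy : y ∉ X) (b : ℕ) (P : Profile) :
    excess X (Function.update c y b) P = excess X c P :=
  Finset.sum_congr rfl fun x hx => by rw [Function.update_of_ne (ne_of_mem_of_not_mem hx hy)]

structure IsCappedExtension (X Y : Finset ℕ) (c : ℕ → ℕ) (P P' : Profile) : Prop where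
  isProfile : IsProfile (X ∪ Y) P'
  restrict_eq : restrict X P' = P
  ntop_le : ∀ z ∈ X ∪ Y, ntop P' z ≤ c z
  le_ntop : ∀ x ∈ X, ntop P x ≤ c x → ntop P x ≤ ntop P' x

lemma IsCappedExtension.cons_keep {c : ℕ → ℕ} {a : ℕ} {w : List ℕ} {P P' : Profile}
    (hXY : Disjoint X Y) (hv : IsVote X (a :: w)) (hca : 0 < c a)
    (h : IsCappedExtension X Y (Function.update c a (c a - 1)) P P') :
    IsCappedExtension X Y c ((a :: w) :: P) ((a :: (w ++ Y.toList)) :: P') where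
  isProfile := List.forall_mem_cons.2 ⟨hv.append (isVote_toList Y) hXY, h.isProfile⟩
  restrict_eq := by
    rw [restrict_cons, h.restrict_eq, ← List.cons_append, List.filter_append,
      filter_mem_of_isVote hv, filter_mem_eq_nil_of_isVote (isVote_toList Y) hXY, List.append_nil]
  ntop_le z hz := by
    have := h.ntop_le z hz
    rw [ntop_cons_cons]
    by_cases haz : a = z
    · subst haz; rw [Function.update_self] at this; rw [if_pos rfl]; omega
    · rw [Function.update_of_ne (Ne.symm haz)] at this; rw [if_neg haz]; omega
  le_ntop x hx hle := by
    have := h.le_ntop x hx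
    simp only [ntop_cons_cons] at hle ⊢
    by_cases hax : a = x
    · subst hax; rw [Function.update_self] at this; rw [if_pos rfl] at hle ⊢; omega
    · rw [Function.update_of_ne (Ne.symm hax)] at this; rw [if_neg hax] at hle ⊢; omega

lemma IsCappedExtension.cons_demote {c : ℕ → ℕ} {a y : ℕ} {w : List ℕ} {P P' : Profile}
    (hXY : Disjoint X Y) (hv : IsVote X (a :: w)) (hca : c a = 0) (hy : y ∈ Y) (hcy : 0 < c y)
    (h : IsCappedExtension X Y (Function.update c y (c y - 1)) P P') :
    IsCappedExtension X Y c ((a :: w) :: P) ((y :: ((Y.erase y).toList ++ a :: w)) :: P') where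
  isProfile := List.forall_mem_cons.2
    ⟨Finset.union_comm Y X ▸ (isVote_cons_toList_erase hy).append hv hXY.symm, h.isProfile⟩
  restrict_eq := by
    rw [restrict_cons, h.restrict_eq, ← List.cons_append, List.filter_append,
      filter_mem_of_isVote hv, filter_mem_eq_nil_of_isVote (isVote_cons_toList_erase hy) hXY,
      List.nil_append]
  ntop_le z hz := by
    have := h.ntop_le z hz
    rw [ntop_cons_cons]
    by_cases hyz : y = z
    · subst hyz; rw [Function.update_self] at this; rw [if_pos rfl]; omega
    · rw [Function.update_of_ne (Ne.symm hyz)] at this; rw [if_neg hyz]; omega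
  le_ntop x hx hle := by
    have hyx : y ≠ x := fun hyx => Finset.disjoint_left.1 hXY hx (hyx ▸ hy)
    have := h.le_ntop x hx
    rw [Function.update_of_ne hyx.symm] at this
    simp only [ntop_cons_cons] at hle ⊢
    by_cases hax : a = x
    · subst hax; rw [if_pos rfl] at hle; omega
    · simp only [if_neg hax, if_neg hyx] at hle ⊢; omega

theorem exists_isCappedExtension (hXY : Disjoint X Y) (hX : X.Nonempty) {P : Profile}
    (hP : IsProfile X P) {c : ℕ → ℕ} (hc : excess X c P ≤ ∑ y ∈ Y, c y) :
    ∃ P', IsCappedExtension X Y c P P' := by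
  induction P generalizing c with
  | nil => exact ⟨[], by simp [IsProfile], rfl, by simp [ntop], by simp [ntop]⟩
  | cons v P ih =>
    have hv := hP v List.mem_cons_self
    have hPtail : IsProfile X P := fun u hu => hP u (List.mem_cons_of_mem _ hu)
    obtain ⟨a, w, rfl⟩ := List.exists_cons_of_ne_nil (hv.ne_nil hX)
    have ha : a ∈ X := (hv.2 a).1 List.mem_cons_self
    rcases Nat.eq_zero_or_pos (c a) with hca | hca
    · -- `a` is over capacity, so this vote goes to a new candidate that still has room
      rw [excess_cons_cons_of_eq_zero w P ha hca] at hc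
      obtain ⟨y, hy, hcy⟩ : ∃ y ∈ Y, c y ≠ 0 := Finset.exists_ne_zero_of_sum_ne_zero (by omega)
      obtain ⟨P', hP'⟩ := ih hPtail (c := Function.update c y (c y - 1)) (by
        rw [excess_update_of_notMem (Finset.disjoint_right.1 hXY hy), Finset.sum_update_of_mem hy]
        rw [Finset.sum_eq_add_sum_sdiff_singleton_of_mem hy] at hc
        omega)
      exact ⟨_, hP'.cons_demote hXY hv hca hy (Nat.pos_of_ne_zero hcy)⟩
    · obtain ⟨P', hP'⟩ := ih hPtail (c := Function.update c a (c a - 1)) (by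
        rwa [← excess_cons_cons_of_pos w P hca,
          Finset.sum_update_of_notMem (Finset.disjoint_left.1 hXY ha)])
      exact ⟨_, hP'.cons_keep hXY hv hca⟩

end

theorem stmt_0_general (X : Finset ℕ) (P : Profile) (hP : IsProfile X P)
    (xstar : ℕ) (hx : xstar ∈ X) (k : ℕ) :
    (∃ Y : Finset ℕ, Disjoint X Y ∧ Y.card = k ∧
      ∃ P', IsProfile (X ∪ Y) P' ∧ Extends X P' P ∧
        ∀ z ∈ X ∪ Y, ntop P' z ≤ ntop P' xstar) ↔
      ∑ x ∈ X, (ntop P x - ntop P xstar) ≤ k * ntop P xstar := by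
  constructor
  · rintro ⟨Y, hXY, rfl, P', hP', hext, hwin⟩
    exact sum_tsub_ntop_le_card_mul hP hP' hext hXY hx hwin
  · intro h
    obtain ⟨Y, hXY, rfl⟩ := exists_finset_disjoint_card_eq X k
    obtain ⟨P', hP'⟩ := exists_isCappedExtension hXY ⟨xstar, hx⟩ hP
      (c := fun _ => ntop P xstar) (by simpa [excess] using h)
    exact ⟨Y, hXY, rfl, P', hP'.isProfile, hP'.restrict_eq,
      fun z hz => (hP'.ntop_le z hz).trans (hP'.le_ntop xstar hx le_rfl)⟩

/-- Plurality characterization of possible cowinners w.r.t. adding `k` new candidates. -/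
theorem stmt_0 (X : Finset ℕ) (P : Profile) (hP : IsProfile X P)
    (xstar : ℕ) (hx : xstar ∈ X) (k : ℕ) (hk : 1 ≤ k) :
    (∃ Y : Finset ℕ, Disjoint X Y ∧ Y.card = k ∧
      ∃ P', IsProfile (X ∪ Y) P' ∧ Extends X P' P ∧
        ∀ z ∈ X ∪ Y, ntop P' z ≤ ntop P' xstar) ↔
      ∑ x ∈ X, (ntop P x - ntop P xstar) ≤ k * ntop P xstar :=
  stmt_0_general X P hP xstar hx k
end PcWNC
end

section
/- Let K ≥ 1, let P be an n-voter profile over X, and x* ∈ X. Then x* is a possible cowinner for K-approval with respect to the addition of one new candidate if and only if both: (1) for every x ∈ X with S_K(x,P) > S_K(x*,P), the number n(P,K,x) of votes ranking x exactly in position K satisfies n(P,K,x) ≥ S_K(x,P) − S_K(x*,P); and (2) S_K(x*,P) ≥ Σ_{x ∈ X} max(0, S_K(x,P) − S_K(x*,P)). -/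
/-!
Inserting `y` into a vote never lifts a candidate of `X` into the top `K`, and pushes out of it at
most the candidate ranked `K`-th, which happens exactly when `y` lands in the top `K`. So if `x*`
cowins in an extension, every `x` loses at least `S_K(x) - S_K(x*)` approvals, all in votes
ranking it `K`-th; and since each vote approves `min K |X|` candidates before and
`min K (|X| + 1)` after the insertion, `y` gains at least the total loss, while it has at most
`S_K(x*)` approvals.

Conversely, put `y` right above `x` in `S_K(x) - S_K(x*)` of the votes ranking `x` in position
`K`, and last in every other vote. If `K ≤ |X|`, the approvals of `y` are exactly the total number
of these demotions; otherwise every vote approves every candidate.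
-/

namespace List

variable {α : Type*}

theorem mem_take_middle_iff [DecidableEq α] {a b : List α} {y z : α} (hz : z ≠ y) (K : ℕ) :
    z ∈ (a ++ y :: b).take K ↔
      z ∈ (a ++ b).take K ∧ ¬(a.length < K ∧ z ∈ a ++ b ∧ (a ++ b).idxOf z + 1 = K) := by
  by_cases hza : z ∈ a
  · have hlt : a.idxOf z < a.length := idxOf_lt_length_iff.2 hza
    rw [mem_take_iff_idxOf_lt (mem_append_left _ hza),
      mem_take_iff_idxOf_lt (mem_append_left _ hza), idxOf_append_of_mem hza,
      idxOf_append_of_mem hza]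
    omega
  by_cases hzb : z ∈ b
  · rw [mem_take_iff_idxOf_lt (by simp [hzb]), mem_take_iff_idxOf_lt (by simp [hzb]),
      idxOf_append_of_notMem hza, idxOf_append_of_notMem hza, idxOf_cons_ne _ (Ne.symm hz)]
    simp only [mem_append, hzb, or_true, true_and]
    omega
  · have hz' : z ∉ a ++ y :: b := by simp [hza, hzb, hz]
    have hz'' : z ∉ a ++ b := by simp [hza, hzb]
    exact iff_of_false (fun h => hz' (mem_of_mem_take h)) (fun h => hz'' (mem_of_mem_take h.1))

theorem mem_take_append_singleton_iff [DecidableEq α] {v : List α} {y z : α} (hz : z ≠ y)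
    (K : ℕ) :
    z ∈ (v ++ [y]).take K ↔ z ∈ v.take K := by
  have := mem_take_middle_iff (a := v) (b := []) hz K
  simp only [append_nil] at this
  rw [this, and_iff_left_iff_imp]
  rintro - ⟨hK, hzv, rfl⟩
  have := idxOf_lt_length_iff.2 hzv
  omega

theorem Nodup.getElem?_eq_some_iff_idxOf_eq [DecidableEq α] {l : List α} (hl : l.Nodup)
    {i : ℕ} {z : α} :
    l[i]? = some z ↔ z ∈ l ∧ l.idxOf z = i := by
  constructor
  · intro h
    obtain ⟨hi, rfl⟩ := getElem?_eq_some_iff.1 h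
    exact ⟨getElem_mem hi, hl.idxOf_getElem i hi⟩
  · rintro ⟨hz, rfl⟩
    exact getElem?_idxOf hz

theorem mem_take_insert_pred_iff [DecidableEq α] {v : List α} (hv : v.Nodup) {y z : α}
    (hz : z ≠ y) {K : ℕ} (hK : 1 ≤ K) :
    z ∈ (v.take (K - 1) ++ y :: v.drop (K - 1)).take K ↔
      z ∈ v.take K ∧ v[K - 1]? ≠ some z := by
  rw [mem_take_middle_iff hz, take_append_drop, length_take, ne_eq,
    hv.getElem?_eq_some_iff_idxOf_eq]
  have hlen : min (K - 1) v.length < K := by omega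
  have hidx : v.idxOf z + 1 = K ↔ v.idxOf z = K - 1 := by omega
  simp only [hlen, hidx, true_and]

theorem filter_middle {p : α → Bool} {a b : List α} {y : α} (hab : ∀ c ∈ a ++ b, p c)
    (hy : ¬p y) : (a ++ y :: b).filter p = a ++ b := by
  rw [filter_append, filter_cons_of_neg hy, ← filter_append, filter_eq_self.2 hab]

theorem countP_le_countP_add_countP {p q r : α → Bool} {l : List α}
    (h : ∀ c ∈ l, p c → q c ∨ r c) : l.countP p ≤ l.countP q + l.countP r := by
  induction l with
  | nil => simp
  | cons c l ih =>
    have hc := h c mem_cons_self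
    have := ih fun d hd => h d (mem_cons_of_mem _ hd)
    simp only [countP_cons]
    split_ifs <;> simp_all <;> omega

end List

namespace PcWNC

variable {X : Finset ℕ} {y : ℕ}

def IsInsertion (y : ℕ) (v w : List ℕ) : Prop := ∃ a c, v = a ++ c ∧ w = a ++ y :: c

theorem IsVote.length_eq {v : List ℕ} (hv : IsVote X v) : v.length = X.card := by
  rw [← List.toFinset_card_of_nodup hv.1]
  congr 1
  ext c
  simp [hv.2 c]

theorem IsVote.middle {a b : List ℕ} (hv : IsVote X (a ++ b)) (hy : y ∉ X) :
    IsVote (insert y X) (a ++ y :: b) := by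
  refine ⟨List.nodup_middle.2 (List.nodup_cons.2 ⟨fun h => hy ((hv.2 y).1 h), hv.1⟩),
    fun c => ?_⟩
  rw [Finset.mem_insert, ← hv.2 c]
  simp only [List.mem_append, List.mem_cons]
  tauto

theorem IsVote.isInsertion_filter {w : List ℕ} (hw : IsVote (insert y X) w) (hy : y ∉ X) :
    IsInsertion y (w.filter (fun c => decide (c ∈ X))) w := by
  obtain ⟨a, b, rfl⟩ := List.append_of_mem ((hw.2 y).2 (Finset.mem_insert_self y X))
  refine ⟨a, b, List.filter_middle (fun c hc => ?_) (by simpa using hy), rfl⟩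
  have hcy : c ≠ y := by
    rintro rfl
    exact (List.nodup_cons.1 (List.nodup_middle.1 hw.1)).1 hc
  simpa [hcy] using (hw.2 c).1 (by simp_all)

theorem IsVote.filter {Y : Finset ℕ} {w : List ℕ} (hw : IsVote Y w) (hXY : X ⊆ Y) :
    IsVote X (w.filter (fun c => decide (c ∈ X))) :=
  ⟨hw.1.filter _, fun c => by simpa using fun hc => (hw.2 c).2 (hXY hc)⟩

theorem IsProfile.restrict {Y : Finset ℕ} {P : Profile} (hP : IsProfile Y P) (hXY : X ⊆ Y) :
    IsProfile X (restrict X P) := by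
  simp only [IsProfile, PcWNC.restrict, List.mem_map]
  rintro _ ⟨w, hw, rfl⟩
  exact (hP w hw).filter hXY

theorem IsVote.sum_mem_take {v : List ℕ} (hv : IsVote X v) (K : ℕ) :
    ∑ z ∈ X, (if z ∈ v.take K then 1 else 0) = min K X.card := by
  have hsub : X.filter (· ∈ v.take K) = (v.take K).toFinset := by
    ext c
    simp only [Finset.mem_filter, List.mem_toFinset, and_iff_right_iff_imp]
    exact fun hc => (hv.2 c).1 (List.mem_of_mem_take hc)
  rw [Finset.sum_boole, hsub, List.toFinset_card_of_nodup (hv.1.sublist (List.take_sublist K v)),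
    List.length_take, hv.length_eq, Nat.cast_id]

theorem approval_cons (K : ℕ) (v : List ℕ) (Q : Profile) (z : ℕ) :
    approval K (v :: Q) z = approval K Q z + if z ∈ v.take K then 1 else 0 := by
  simp [approval, List.countP_cons]

theorem nPos_cons_of_nodup {v : List ℕ} (hv : v.Nodup) (Q : Profile) {K : ℕ} (hK : 1 ≤ K)
    (z : ℕ) : nPos (v :: Q) K z = nPos Q K z + if v[K - 1]? = some z then 1 else 0 := by
  have hidx : v.idxOf z + 1 = K ↔ v.idxOf z = K - 1 := by omega
  simp [nPos, List.countP_cons, hidx, hv.getElem?_eq_some_iff_idxOf_eq]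

theorem sum_approval {P : Profile} (hP : IsProfile X P) (K : ℕ) :
    ∑ z ∈ X, approval K P z = P.length * min K X.card := by
  induction P with
  | nil => simp [approval]
  | cons v P ih =>
    have hv := (hP v List.mem_cons_self).sum_mem_take K
    have := ih fun w hw => hP w (List.mem_cons_of_mem v hw)
    rw [Finset.sum_congr rfl fun z _ => approval_cons K v P z, Finset.sum_add_distrib, this, hv,
      List.length_cons]
    ring

theorem approval_eq_length {P : Profile} (hP : IsProfile X P) {K : ℕ} (hK : X.card ≤ K)
    {z : ℕ} (hz : z ∈ X) : approval K P z = P.length :=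
  List.countP_eq_length.2 fun v hv => by
    rw [decide_eq_true_eq, List.take_of_length_le (by rw [(hP v hv).length_eq]; exact hK)]
    exact ((hP v hv).2 z).2 hz

theorem approval_eq_zero_of_notMem {P : Profile} (hP : IsProfile X P) (K : ℕ) {z : ℕ}
    (hz : z ∉ X) : approval K P z = 0 :=
  List.countP_eq_zero.2 fun v hv h =>
    hz (((hP v hv).2 z).1 (List.mem_of_mem_take (of_decide_eq_true h)))

theorem approval_le_approval_restrict (hy : y ∉ X) {P' : Profile}
    (hP' : IsProfile (insert y X) P') (K : ℕ) {z : ℕ} (hz : z ≠ y) :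
    approval K P' z ≤ approval K (restrict X P') z := by
  rw [restrict, approval, approval, List.countP_map]
  refine List.countP_mono_left fun w hw => ?_
  obtain ⟨a, b, hab, rfl⟩ := (hP' w hw).isInsertion_filter hy
  simp only [Function.comp_apply, ← hab, decide_eq_true_eq, List.mem_take_middle_iff hz]
  exact And.left

theorem approval_restrict_le_add_nPos (hy : y ∉ X) {P' : Profile}
    (hP' : IsProfile (insert y X) P') (K : ℕ) {z : ℕ} (hz : z ≠ y) :
    approval K (restrict X P') z ≤ approval K P' z + nPos (restrict X P') K z := by
  rw [restrict, approval, approval, nPos, List.countP_map, List.countP_map]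
  refine List.countP_le_countP_add_countP fun w hw => ?_
  obtain ⟨a, b, hab, rfl⟩ := (hP' w hw).isInsertion_filter hy
  simp only [Function.comp_apply, ← hab, decide_eq_true_eq, List.mem_take_middle_iff hz]
  tauto

theorem approval_restrict_sub_le_nPos (hy : y ∉ X) {P' : Profile}
    (hP' : IsProfile (insert y X) P') {K xstar : ℕ}
    (hwin : ∀ z ∈ insert y X, approval K P' z ≤ approval K P' xstar) (hx : xstar ∈ X)
    {x : ℕ} (hxX : x ∈ X) :
    approval K (restrict X P') x - approval K (restrict X P') xstar ≤
      nPos (restrict X P') K x := by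
  have h1 := approval_restrict_le_add_nPos hy hP' K (ne_of_mem_of_not_mem hxX hy)
  have h2 := approval_le_approval_restrict hy hP' K (ne_of_mem_of_not_mem hx hy)
  have h3 := hwin x (Finset.mem_insert_of_mem hxX)
  omega

theorem sum_approval_restrict_sub_le (hy : y ∉ X) {P' : Profile}
    (hP' : IsProfile (insert y X) P') {K xstar : ℕ}
    (hwin : ∀ z ∈ insert y X, approval K P' z ≤ approval K P' xstar) (hx : xstar ∈ X) :
    ∑ x ∈ X, (approval K (restrict X P') x - approval K (restrict X P') xstar) ≤
      approval K (restrict X P') xstar := by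
  set P := restrict X P'
  have hle : ∀ x ∈ X, approval K P' x ≤ approval K P x := fun x hxX =>
    approval_le_approval_restrict hy hP' K (ne_of_mem_of_not_mem hxX hy)
  have htotal : ∑ x ∈ X, approval K P x ≤ approval K P' y + ∑ x ∈ X, approval K P' x := by
    rw [← Finset.sum_insert hy, sum_approval hP',
      sum_approval (hP'.restrict (Finset.subset_insert y X)), restrict, List.length_map,
      Finset.card_insert_of_notMem hy]
    gcongr
    omega
  calc ∑ x ∈ X, (approval K P x - approval K P xstar)
      ≤ ∑ x ∈ X, (approval K P x - approval K P' x) :=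
        Finset.sum_le_sum fun x hxX => by
          have := hwin x (Finset.mem_insert_of_mem hxX)
          have := hle xstar hx
          omega
    _ = ∑ x ∈ X, approval K P x - ∑ x ∈ X, approval K P' x := Finset.sum_tsub_distrib _ hle
    _ ≤ approval K P' y := by omega
    _ ≤ approval K P' xstar := hwin y (Finset.mem_insert_self y X)
    _ ≤ approval K P xstar := hle xstar hx

/-- `b x` counts the votes still to come in which `x`, ranked `K`-th, must be pushed out of the
top `K` by placing `y` right above it; in all other votes `y` is ranked last. -/
def demotionExtension (K y : ℕ) : (ℕ → ℕ) → Profile → Profile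
  | _, [] => []
  | b, v :: Q =>
    match v[K - 1]? with
    | some x =>
      if 0 < b x then
        (v.take (K - 1) ++ y :: v.drop (K - 1)) ::
          demotionExtension K y (Function.update b x (b x - 1)) Q
      else (v ++ [y]) :: demotionExtension K y b Q
    | none => (v ++ [y]) :: demotionExtension K y b Q

theorem forall₂_demotionExtension (K y : ℕ) (b : ℕ → ℕ) (Q : Profile) :
    List.Forall₂ (IsInsertion y) Q (demotionExtension K y b Q) := by
  have happend (v : List ℕ) : IsInsertion y v (v ++ [y]) :=
    ⟨v, [], (List.append_nil v).symm, rfl⟩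
  induction Q generalizing b with
  | nil => exact .nil
  | cons v Q ih =>
    simp only [demotionExtension]
    split
    · split
      · exact .cons ⟨_, _, (List.take_append_drop _ v).symm, rfl⟩ (ih _)
      · exact .cons (happend v) (ih b)
    · exact .cons (happend v) (ih b)

theorem isProfile_and_extends_of_forall₂ (hy : y ∉ X) {P P' : Profile} (hP : IsProfile X P)
    (h : List.Forall₂ (IsInsertion y) P P') :
    IsProfile (insert y X) P' ∧ Extends X P' P := by
  induction h with
  | nil => exact ⟨by simp [IsProfile], rfl⟩
  | @cons v w P P' hvw _ ih =>
    obtain ⟨a, c, rfl, rfl⟩ := hvw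
    have hv := hP _ List.mem_cons_self
    obtain ⟨ihP, ihE⟩ := ih fun u hu => hP u (List.mem_cons_of_mem _ hu)
    refine ⟨List.forall_mem_cons.2 ⟨hv.middle hy, ihP⟩, ?_⟩
    rw [Extends, restrict, List.map_cons,
      List.filter_middle (fun c hc => by simpa using (hv.2 c).1 hc) (by simpa using hy)]
    exact congrArg _ ihE

theorem approval_eq_approval_demotionExtension_add {K : ℕ} (hK : 1 ≤ K) {Q : Profile}
    (hQ : IsProfile X Q) {b : ℕ → ℕ} (hb : ∀ z, b z ≤ nPos Q K z) {z : ℕ}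
    (hz : z ≠ y) :
    approval K Q z = approval K (demotionExtension K y b Q) z + b z := by
  induction Q generalizing b with
  | nil =>
    have : b z = 0 := by simpa [nPos] using hb z
    simp [approval, demotionExtension, this]
  | cons v Q ih =>
    have hv := (hQ v List.mem_cons_self).1
    have hQ' : IsProfile X Q := fun u hu => hQ u (List.mem_cons_of_mem _ hu)
    have hb' := fun u => (hb u).trans_eq (nPos_cons_of_nodup hv Q hK u)
    rw [approval_cons]
    rcases hx : v[K - 1]? with _ | x
    · simp only [hx, reduceCtorEq, if_false, add_zero] at hb'
      simp only [demotionExtension, hx, approval_cons, List.mem_take_append_singleton_iff hz,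
        ih hQ' hb']
      omega
    simp only [hx, Option.some.injEq] at hb'
    by_cases hbx : 0 < b x
    · have hupdate : ∀ u, Function.update b x (b x - 1) u ≤ nPos Q K u := fun u => by
        rcases eq_or_ne u x with rfl | hux
        · simpa using Nat.sub_le_of_le_add (hb' u)
        · simpa [hux, Ne.symm hux] using hb' u
      simp only [demotionExtension, hx, if_pos hbx, approval_cons,
        List.mem_take_insert_pred_iff hv hz hK, ih hQ' hupdate]
      rcases eq_or_ne z x with rfl | hzx
      · have hzK : z ∈ v.take K := by
          obtain ⟨hzv, hidx⟩ := hv.getElem?_eq_some_iff_idxOf_eq.1 hx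
          exact (List.mem_take_iff_idxOf_lt hzv).2 (by omega)
        simp only [hzK, ne_eq, not_true_eq_false, and_false, if_false, if_true,
          Function.update_self]
        omega
      · simp only [ne_eq, Option.some.injEq, Ne.symm hzx, not_false_eq_true, and_true,
          Function.update_of_ne hzx]
        omega
    · have hb'' : ∀ u, b u ≤ nPos Q K u := fun u => by
        rcases eq_or_ne x u with rfl | hux
        · omega
        · simpa [hux] using hb' u
      simp only [demotionExtension, hx, if_neg hbx, approval_cons,
        List.mem_take_append_singleton_iff hz, ih hQ' hb'']
      omega

theorem approval_demotionExtension_self {K : ℕ} (hK : 1 ≤ K) (hKX : K ≤ X.card) (hy : y ∉ X)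
    {P : Profile} (hP : IsProfile X P) {b : ℕ → ℕ} (hb : ∀ z, b z ≤ nPos P K z) :
    approval K (demotionExtension K y b P) y = ∑ z ∈ X, b z := by
  set P' := demotionExtension K y b P
  have hP' := (isProfile_and_extends_of_forall₂ hy hP (forall₂_demotionExtension K y b P)).1
  have hnew : approval K P' y + ∑ z ∈ X, approval K P' z = P.length * K := by
    rw [← Finset.sum_insert hy, sum_approval hP', Finset.card_insert_of_notMem hy,
      min_eq_left (by omega), ← (forall₂_demotionExtension K y b P).length_eq]
  have hold : ∑ z ∈ X, approval K P z = P.length * K := by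
    rw [sum_approval hP, min_eq_left hKX]
  have hsplit : ∑ z ∈ X, approval K P z = ∑ z ∈ X, approval K P' z + ∑ z ∈ X, b z := by
    rw [← Finset.sum_add_distrib]
    exact Finset.sum_congr rfl fun z hz =>
      approval_eq_approval_demotionExtension_add hK hP hb (ne_of_mem_of_not_mem hz hy)
  omega

theorem exists_extension_cowinner {K : ℕ} (hK : 1 ≤ K) {P : Profile} (hP : IsProfile X P)
    {xstar : ℕ} (hx : xstar ∈ X)
    (h1 : ∀ x ∈ X, approval K P xstar < approval K P x →
      approval K P x - approval K P xstar ≤ nPos P K x)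
    (h2 : ∑ x ∈ X, (approval K P x - approval K P xstar) ≤ approval K P xstar) :
    ∃ y, y ∉ X ∧ ∃ P', IsProfile (insert y X) P' ∧ Extends X P' P ∧
      ∀ z ∈ insert y X, approval K P' z ≤ approval K P' xstar := by
  obtain ⟨y, hy⟩ := Infinite.exists_notMem_finset X
  set S := approval K P
  set b : ℕ → ℕ := fun z => S z - S xstar with hb_def
  have hb : ∀ z, b z ≤ nPos P K z := fun z => by
    by_cases hlt : S xstar < S z
    · have hzX : z ∈ X := by
        by_contra hzX
        simp [S, approval_eq_zero_of_notMem hP K hzX] at hlt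
      exact h1 z hzX hlt
    · simp [hb_def, Nat.sub_eq_zero_of_le (not_lt.1 hlt)]
  set P' := demotionExtension K y b P
  obtain ⟨hP', hext⟩ :=
    isProfile_and_extends_of_forall₂ hy hP (forall₂_demotionExtension K y b P)
  have hS : ∀ z ≠ y, S z = approval K P' z + b z := fun z hz =>
    approval_eq_approval_demotionExtension_add hK hP hb hz
  have hxs : approval K P' xstar = S xstar := by
    have := hS xstar (ne_of_mem_of_not_mem hx hy)
    simp only [hb_def, tsub_self] at this
    omega
  refine ⟨y, hy, P', hP', hext, (Finset.forall_mem_insert _ _ _).2 ⟨?_, fun z hz => ?_⟩⟩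
  · rw [hxs]
    rcases le_or_gt K X.card with hKX | hXK
    · exact (approval_demotionExtension_self hK hKX hy hP hb).trans_le h2
    · calc approval K P' y ≤ P'.length := List.countP_le_length
        _ = P.length := (forall₂_demotionExtension K y b P).length_eq.symm
        _ = S xstar := (approval_eq_length hP hXK.le hx).symm
  · have := hS z (ne_of_mem_of_not_mem hz hy)
    simp only [hb_def] at this
    omega

/-- Characterization of possible cowinners for `K`-approval w.r.t. adding one new candidate. -/
theorem stmt_2 (K : ℕ) (hK : 1 ≤ K) (X : Finset ℕ) (P : Profile) (hP : IsProfile X P)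
    (xstar : ℕ) (hx : xstar ∈ X) :
    (∃ y, y ∉ X ∧ ∃ P', IsProfile (insert y X) P' ∧ Extends X P' P ∧
        ∀ z ∈ insert y X, approval K P' z ≤ approval K P' xstar) ↔
      ((∀ x ∈ X, approval K P xstar < approval K P x →
          approval K P x - approval K P xstar ≤ nPos P K x) ∧
        ∑ x ∈ X, (approval K P x - approval K P xstar) ≤ approval K P xstar) := by
  constructor
  · rintro ⟨y, hy, P', hP', rfl, hwin⟩
    exact ⟨fun x hxX _ => approval_restrict_sub_le_nPos hy hP' hwin hx hxX,
      sum_approval_restrict_sub_le hy hP' hwin hx⟩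
  · rintro ⟨h1, h2⟩
    exact exists_extension_cowinner hK hP hx h1 h2

end PcWNC
end

section
/- Let K ≥ 1 and let P be a profile over X = {x*} ∪ {x_1,...,x_p}. For x ∈ X, let U(x) be the number of votes whose candidates in positions K−1 and K are respectively x and x*, and let T(x) = S_{K−2}(x,P) + U(x). Then for each x ∈ X there exists an extension Q of P obtained by adding two new candidates such that S_K(x,Q) ≤ S_K(x*,Q) if and only if T(x) ≤ S_K(x*,P). -/
/-!
Deleting the two new candidates from a vote of an extension moves every old candidate up by
at most two places and keeps the relative order of the old candidates. Hence, in a vote of the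
extension `Q`, `x` is in the top `K` whenever it is in the top `K - 2` of the restricted vote, or
whenever it sits directly above `xstar` at places `K - 1`, `K` and `xstar` stays in the top `K`
of `Q`; and `xstar` can only lose its top-`K` place. Counting vote by vote gives
`T(x) + S_K(xstar, Q) ≤ S_K(x, Q) + S_K(xstar, P)`.

Conversely, in each vote not counted by `T(x)`, inserting both new candidates directly above `x`
pushes `x` out of the top `K` without pushing `xstar` out; in the other votes they go to the
bottom. Then `S_K(x, Q) ≤ T(x)` and `S_K(xstar, P) ≤ S_K(xstar, Q)`.
-/

namespace PcWNC

/-- Number of votes ranking `x` in position `K-1` and `xstar` in position `K`. -/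
def U (P : Profile) (K : ℕ) (x xstar : ℕ) : ℕ :=
  P.countP (fun v => decide (x ∈ v ∧ xstar ∈ v ∧ v.idxOf x + 2 = K ∧ v.idxOf xstar + 1 = K))

end PcWNC

namespace List

variable {α : Type*} {p : α → Bool} {l : List α} {n : ℕ} {z : α}

theorem countP_or_of_disjoint {q : α → Bool} (h : ∀ a ∈ l, p a → q a → False) :
    l.countP (fun a => p a || q a) = l.countP p + l.countP q := by
  induction l with
  | nil => rfl
  | cons a l ih =>
    have ha := h a mem_cons_self
    simp only [countP_cons, ih fun b hb => h b (mem_cons_of_mem a hb)]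
    cases hp : p a <;> cases hq : q a <;> simp [hp, hq] at ha ⊢ <;> omega

theorem countP_add_le_countP_add {a b c d : α → Bool} (hcd : ∀ v ∈ l, c v → d v)
    (habd : ∀ v ∈ l, a v → b v ∨ d v) (hacb : ∀ v ∈ l, a v → c v → b v) :
    l.countP a + l.countP c ≤ l.countP b + l.countP d := by
  induction l with
  | nil => rfl
  | cons v l ih =>
    have h := ih (fun u hu => hcd u (mem_cons_of_mem v hu))
      (fun u hu => habd u (mem_cons_of_mem v hu)) (fun u hu => hacb u (mem_cons_of_mem v hu))
    have h₁ := hcd v mem_cons_self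
    have h₂ := habd v mem_cons_self
    have h₃ := hacb v mem_cons_self
    simp only [countP_cons]
    cases ha : a v <;> cases hb : b v <;> cases hc : c v <;> cases hd : d v <;>
      simp [ha, hb, hc, hd] at h₁ h₂ h₃ ⊢ <;> omega

theorem filter_take_eq_take_filter (p : α → Bool) (l : List α) (n : ℕ) :
    (l.take n).filter p = (l.filter p).take ((l.take n).countP p) := by
  have h := (l.take_prefix n).filter p
  rwa [prefix_iff_eq_take, ← countP_eq_length_filter] at h

theorem mem_take_filter_of_mem_take (hz : p z) (h : z ∈ l.take n) :
    z ∈ (l.filter p).take n := by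
  have h' : z ∈ (l.take n).filter p := mem_filter.mpr ⟨h, hz⟩
  rw [filter_take_eq_take_filter] at h'
  exact take_subset_take_left _ (countP_le_length.trans (length_take_le n l)) h'

theorem mem_take_of_mem_take_filter {d : ℕ} (hd : l.countP (fun a => !p a) ≤ d)
    (h : z ∈ (l.filter p).take (n - d)) : z ∈ l.take n := by
  rcases le_or_gt l.length n with hn | hn
  · rw [take_of_length_le hn]
    exact (mem_filter.mp (take_subset _ _ h)).1
  · have hnot : (l.take n).countP (fun a => !p a) ≤ d := (take_sublist n l).countP_le.trans hd
    have hlen := length_eq_countP_add_countP p (l := l.take n)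
    simp only [Bool.not_eq_true, Bool.decide_eq_false, length_take_of_le hn.le] at hlen
    have h' : z ∈ (l.take n).filter p := by
      rw [filter_take_eq_take_filter]
      exact take_subset_take_left _ (by omega) h
    exact (mem_filter.mp h').1

theorem mem_take_of_idxOf_filter_lt [BEq α] [LawfulBEq α] {z' : α} (hz : z ∈ l.filter p)
    (hz' : z' ∈ l.filter p) (hlt : (l.filter p).idxOf z < (l.filter p).idxOf z')
    (h : z' ∈ l.take n) : z ∈ l.take n := by
  have h' : z' ∈ (l.filter p).take ((l.take n).countP p) := by
    rw [← filter_take_eq_take_filter]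
    exact mem_filter.mpr ⟨h, (mem_filter.mp hz').2⟩
  have hzm : z ∈ (l.filter p).take ((l.take n).countP p) :=
    (mem_take_iff_idxOf_lt hz).mpr (hlt.trans ((mem_take_iff_idxOf_lt hz').mp h'))
  rw [← filter_take_eq_take_filter] at hzm
  exact (mem_filter.mp hzm).1

end List

namespace PcWNC

section InsertBlock

variable {α : Type*} {i n : ℕ} {ys l : List α}

def insertBlock (i : ℕ) (ys l : List α) : List α := l.take i ++ ys ++ l.drop i

theorem insertBlock_perm (i : ℕ) (ys l : List α) : (insertBlock i ys l).Perm (ys ++ l) := by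
  have h : (l.take i ++ ys).Perm (ys ++ l.take i) := List.perm_append_comm
  simpa only [insertBlock, List.append_assoc, List.take_append_drop] using h.append_right (l.drop i)

theorem filter_insertBlock {p : α → Bool} (h : ∀ y ∈ ys, p y = false) :
    (insertBlock i ys l).filter p = l.filter p := by
  have hys : ys.filter p = [] := List.filter_eq_nil_iff.mpr fun y hy => by simp [h y hy]
  rw [insertBlock, List.filter_append, List.filter_append, hys, List.append_nil,
    ← List.filter_append, List.take_append_drop]

theorem take_insertBlock_of_le (hi : i ≤ l.length) (hn : n ≤ i) :
    (insertBlock i ys l).take n = l.take n := by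
  rw [insertBlock, List.append_assoc, List.take_append, List.take_take, List.length_take_of_le hi,
    Nat.sub_eq_zero_of_le hn, List.take_zero, List.append_nil, Nat.min_eq_left hn]

theorem mem_take_insertBlock {z : α} (hi : i ≤ l.length) (hzi : z ∈ l.take i)
    (hzn : z ∈ l.take n) : z ∈ (insertBlock i ys l).take n := by
  rcases le_total n i with hn | hn
  · rwa [take_insertBlock_of_le hi hn]
  · rw [← take_insertBlock_of_le (ys := ys) hi le_rfl] at hzi
    exact List.take_subset_take_left _ hn hzi

theorem take_insertBlock_subset (hi : i ≤ l.length) (hn : n ≤ i + ys.length) :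
    (insertBlock i ys l).take n ⊆ l.take i ++ ys := by
  have hlen : (l.take i ++ ys).length = i + ys.length := by
    rw [List.length_append, List.length_take_of_le hi]
  intro z hz
  have hz' := List.take_subset_take_left _ hn hz
  rwa [insertBlock, ← hlen, List.take_left] at hz'

end InsertBlock

theorem IsVote.filter_eq_self {X : Finset ℕ} {v : List ℕ} (hv : IsVote X v) :
    v.filter (fun c => decide (c ∈ X)) = v :=
  List.filter_eq_self.mpr fun c hc => by simpa using (hv.2 c).mp hc

theorem IsVote.countP_not_mem_le {X Y : Finset ℕ} {w : List ℕ} (hw : IsVote Y w) :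
    w.countP (fun c => !decide (c ∈ X)) ≤ (Y \ X).card := by
  rw [List.countP_eq_length_filter, ← List.toFinset_card_of_nodup (hw.1.filter _)]
  refine Finset.card_le_card fun c hc => ?_
  simp only [List.mem_toFinset, List.mem_filter, Bool.not_eq_true', decide_eq_false_iff_not] at hc
  exact Finset.mem_sdiff.mpr ⟨(hw.2 c).mp hc.1, hc.2⟩

theorem card_insert_insert_sdiff_le (y₁ y₂ : ℕ) (X : Finset ℕ) :
    (insert y₁ (insert y₂ X) \ X).card ≤ 2 := by
  refine (Finset.card_le_card (t := {y₁, y₂}) fun c hc => ?_).trans Finset.card_le_two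
  simp only [Finset.mem_sdiff, Finset.mem_insert] at hc
  simp only [Finset.mem_insert, Finset.mem_singleton]
  tauto

theorem IsVote.insertBlock {X : Finset ℕ} {v : List ℕ} (hv : IsVote X v) {y₁ y₂ : ℕ}
    (hy₁ : y₁ ∉ X) (hy₂ : y₂ ∉ X) (hne : y₁ ≠ y₂) (i : ℕ) :
    IsVote (insert y₁ (insert y₂ X)) (insertBlock i [y₁, y₂] v) := by
  have hperm := insertBlock_perm i [y₁, y₂] v
  refine ⟨hperm.nodup_iff.mpr ?_, fun c => ?_⟩
  · have hy₁v : y₁ ∉ v := fun h => hy₁ ((hv.2 y₁).mp h)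
    have hy₂v : y₂ ∉ v := fun h => hy₂ ((hv.2 y₂).mp h)
    simp [hv.1, hy₁v, hy₂v, hne]
  · simp only [hperm.mem_iff, List.cons_append, List.nil_append, List.mem_cons, hv.2 c,
      Finset.mem_insert]

def IsUVote (K x xstar : ℕ) (v : List ℕ) : Prop :=
  x ∈ v ∧ xstar ∈ v ∧ v.idxOf x + 2 = K ∧ v.idxOf xstar + 1 = K

instance (K x xstar : ℕ) (v : List ℕ) : Decidable (IsUVote K x xstar v) :=
  inferInstanceAs (Decidable (_ ∧ _))

/-- The votes counted by `T(x) = S_{K-2}(x, P) + U(x)`. -/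
def IsTVote (K x xstar : ℕ) (v : List ℕ) : Prop := x ∈ v.take (K - 2) ∨ IsUVote K x xstar v

instance (K x xstar : ℕ) (v : List ℕ) : Decidable (IsTVote K x xstar v) :=
  inferInstanceAs (Decidable (_ ∨ _))

theorem countP_isTVote (K x xstar : ℕ) (P : Profile) :
    P.countP (fun v => decide (IsTVote K x xstar v)) = approval (K - 2) P x + U P K x xstar := by
  rw [approval, U, ← List.countP_or_of_disjoint]
  · congr 1
    funext v
    simp only [IsTVote, IsUVote]
    exact Bool.decide_or _ _
  · intro v _ hx hU
    simp only [decide_eq_true_eq] at hx hU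
    have := (List.mem_take_iff_idxOf_lt hU.1).mp hx
    omega

def pushDown (K x xstar y₁ y₂ : ℕ) (v : List ℕ) : List ℕ :=
  insertBlock (if IsTVote K x xstar v then v.length else v.idxOf x) [y₁, y₂] v

section PushDown

variable {K x xstar y₁ y₂ : ℕ} {v : List ℕ}

theorem isTVote_of_mem_take_pushDown (hx : x ∈ v) (hxy₁ : x ≠ y₁) (hxy₂ : x ≠ y₂)
    (h : x ∈ (pushDown K x xstar y₁ y₂ v).take K) : IsTVote K x xstar v := by
  by_contra hT
  have hi : v.idxOf x ≤ v.length := (List.idxOf_lt_length_of_mem hx).le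
  have hK : K - 2 ≤ v.idxOf x := by
    by_contra hlt
    exact hT (Or.inl ((List.mem_take_iff_idxOf_lt hx).mpr (by omega)))
  rw [pushDown, if_neg hT] at h
  rcases List.mem_append.mp (take_insertBlock_subset hi (by simp only [List.length_cons, List.length_nil]; omega) h) with h' | h'
  · exact absurd ((List.mem_take_iff_idxOf_lt hx).mp h') (lt_irrefl _)
  · exact absurd h' (by simp [hxy₁, hxy₂])

theorem mem_take_pushDown (hx : x ∈ v) (hxs : xstar ∈ v) (hne : x ≠ xstar)
    (h : xstar ∈ v.take K) : xstar ∈ (pushDown K x xstar y₁ y₂ v).take K := by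
  rw [pushDown]
  split_ifs with hT
  · exact mem_take_insertBlock le_rfl (by rwa [List.take_length]) h
  · refine mem_take_insertBlock (List.idxOf_lt_length_of_mem hx).le ?_ h
    have hsK := (List.mem_take_iff_idxOf_lt hxs).mp h
    have hxK : ¬ v.idxOf x < K - 2 := fun hlt =>
      hT (Or.inl ((List.mem_take_iff_idxOf_lt hx).mpr hlt))
    have hne' : v.idxOf x ≠ v.idxOf xstar := fun e => hne ((List.idxOf_inj hx).mp e)
    refine (List.mem_take_iff_idxOf_lt hxs).mpr (lt_of_not_ge fun hle => hT (Or.inr ?_))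
    exact ⟨hx, hxs, by omega, by omega⟩

end PushDown

theorem countP_isTVote_add_approval_le {X : Finset ℕ} {y₁ y₂ K x xstar : ℕ} {Q : Profile}
    (hQ : IsProfile (insert y₁ (insert y₂ X)) Q) (hx : x ∈ X) (hxs : xstar ∈ X) :
    (restrict X Q).countP (fun v => decide (IsTVote K x xstar v)) + approval K Q xstar ≤
      approval K Q x + approval K (restrict X Q) xstar := by
  simp only [approval, restrict, List.countP_map]
  apply List.countP_add_le_countP_add <;> intro w hw <;>
    simp only [Function.comp_apply, decide_eq_true_eq]
  · exact List.mem_take_filter_of_mem_take (by simpa)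
  all_goals
    have hd : w.countP (fun c => !decide (c ∈ X)) ≤ 2 :=
      (hQ w hw).countP_not_mem_le.trans (card_insert_insert_sdiff_le y₁ y₂ X)
    have hxw : x ∈ w.filter (fun c => decide (c ∈ X)) :=
      List.mem_filter.mpr ⟨((hQ w hw).2 x).mpr (by simp [hx]), by simpa⟩
    have hxsw : xstar ∈ w.filter (fun c => decide (c ∈ X)) :=
      List.mem_filter.mpr ⟨((hQ w hw).2 xstar).mpr (by simp [hxs]), by simpa⟩
    rintro (hT | ⟨-, -, hxK, hxsK⟩)
  · exact Or.inl (List.mem_take_of_mem_take_filter hd hT)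
  · exact Or.inr ((List.mem_take_iff_idxOf_lt hxsw).mpr (by omega))
  · exact fun _ => List.mem_take_of_mem_take_filter hd hT
  · exact List.mem_take_of_idxOf_filter_lt hxw hxsw (by omega)

theorem exists_extension_of_countP_isTVote_le {X : Finset ℕ} {P : Profile} (hP : IsProfile X P)
    {K x xstar : ℕ} (hx : x ∈ X) (hxs : xstar ∈ X)
    (h : P.countP (fun v => decide (IsTVote K x xstar v)) ≤ approval K P xstar) :
    ∃ y₁ y₂, y₁ ∉ X ∧ y₂ ∉ X ∧ y₁ ≠ y₂ ∧
      ∃ Q, IsProfile (insert y₁ (insert y₂ X)) Q ∧ Extends X Q P ∧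
        approval K Q x ≤ approval K Q xstar := by
  obtain ⟨y₁, hy₁⟩ := Infinite.exists_notMem_finset X
  obtain ⟨y₂, hy₂⟩ := Infinite.exists_notMem_finset (insert y₁ X)
  rw [Finset.mem_insert, not_or] at hy₂
  have hxy₁ : x ≠ y₁ := fun e => hy₁ (e ▸ hx)
  have hxy₂ : x ≠ y₂ := fun e => hy₂.2 (e ▸ hx)
  refine ⟨y₁, y₂, hy₁, hy₂.2, Ne.symm hy₂.1, P.map (pushDown K x xstar y₁ y₂), ?_, ?_, ?_⟩
  · simp only [IsProfile, List.forall_mem_map]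
    exact fun v hv => (hP v hv).insertBlock hy₁ hy₂.2 (Ne.symm hy₂.1) _
  · refine (List.map_map ..).trans (List.map_congr_left fun v hv => ?_) |>.trans P.map_id
    rw [Function.comp_apply, pushDown, filter_insertBlock (by simp [hy₁, hy₂.2]),
      (hP v hv).filter_eq_self, id]
  · rcases eq_or_ne x xstar with rfl | hne
    · exact le_rfl
    refine le_trans ?_ (h.trans ?_) <;> simp only [approval, List.countP_map] <;>
      refine List.countP_mono_left fun v hv => ?_ <;>
      simp only [Function.comp_apply, decide_eq_true_eq]
    · exact isTVote_of_mem_take_pushDown (((hP v hv).2 x).mpr hx) hxy₁ hxy₂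
    · exact mem_take_pushDown (((hP v hv).2 x).mpr hx) (((hP v hv).2 xstar).mpr hxs) hne

theorem stmt_3_general (K : ℕ) (X : Finset ℕ) (P : Profile) (hP : IsProfile X P)
    (xstar : ℕ) (hx : xstar ∈ X) (x : ℕ) (hxX : x ∈ X) :
    (∃ y₁ y₂, y₁ ∉ X ∧ y₂ ∉ X ∧ y₁ ≠ y₂ ∧
      ∃ Q, IsProfile (insert y₁ (insert y₂ X)) Q ∧ Extends X Q P ∧
        approval K Q x ≤ approval K Q xstar) ↔
      approval (K - 2) P x + U P K x xstar ≤ approval K P xstar := by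
  rw [← countP_isTVote]
  constructor
  · rintro ⟨y₁, y₂, -, -, -, Q, hQ, rfl, hQx⟩
    have := countP_isTVote_add_approval_le (K := K) hQ hxX hx
    omega
  · exact exists_extension_of_countP_isTVote_le hP hxX hx

/-- `K`-approval, two new candidates: the score of `x` can be brought down to that of `xstar`
iff `T(x) = S_{K-2}(x,P) + U(x) ≤ S_K(xstar,P)`. -/
theorem stmt_3 (K : ℕ) (hK : 1 ≤ K) (X : Finset ℕ) (P : Profile) (hP : IsProfile X P)
    (xstar : ℕ) (hx : xstar ∈ X) (x : ℕ) (hxX : x ∈ X) :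
    (∃ y₁ y₂, y₁ ∉ X ∧ y₂ ∉ X ∧ y₁ ≠ y₂ ∧
      ∃ Q, IsProfile (insert y₁ (insert y₂ X)) Q ∧ Extends X Q P ∧
        approval K Q x ≤ approval K Q xstar) ↔
      approval (K - 2) P x + U P K x xstar ≤ approval K P xstar :=
  stmt_3_general K X P hP xstar hx x hxX

end PcWNC
end

section
/- Let P be a profile over X = {x*, x_1, ..., x_p}, let Y = {y_1,...,y_k} be k new candidates, and let s = (s_1 ≥ s_2 ≥ ... ≥ s_{p+1+k}) be a scoring vector with s_i − s_{i+1} ≤ s_{i+1} − s_{i+2} for all i (convex differences toward the top). Then x* is a possible cowinner for the scoring rule induced by s with respect to adding the k candidates of Y if and only if x* is a cowinner in the specific extension P̂ of P obtained by inserting y_1,...,y_k immediately below x* (in arbitrary fixed order) in every vote. -/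
/-!
Compare a vote `v'` of an arbitrary extension with the vote of `P̂` built from its restriction
`v` to `X`. A candidate `c ∈ X` sits in `v'` at its position in `v` shifted down by the number
`u c` of new candidates above it, and `u` grows down the vote. If `z` is above `x*`, then `P̂`
keeps both at their positions in `v`, while `v'` shifts them by `u z ≤ u x*`; as the gaps
`s_i - s_{i+1}` grow downwards, this can only increase `s(z) - s(x*)`. If `z` is below `x*`,
`P̂` keeps `x*` in place and pushes `z` down by `|Y|`, the most any extension can. So vote by vote
`P̂` minimises `s(z) - s(x*)` for every `z ∈ X`, and the new candidates, placed below `x*`,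
never beat it.
-/

namespace PcWNC

section ScoringVector

variable {s : ℕ → ℤ}

theorem monotone_sub_shift (hconv : ∀ i, s i - s (i + 1) ≤ s (i + 1) - s (i + 2)) (t : ℕ) :
    Monotone fun i => s i - s (i + t) := by
  have hgap : Monotone fun i => s i - s (i + 1) := monotone_nat_of_le_succ hconv
  refine monotone_nat_of_le_succ fun i => ?_
  have := hgap (Nat.le_add_right i t)
  show s i - s (i + t) ≤ s (i + 1) - s (i + 1 + t)
  rw [Nat.add_right_comm]
  linarith

theorem sub_le_sub_of_shift (hmono : ∀ i, s (i + 1) ≤ s i)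
    (hconv : ∀ i, s i - s (i + 1) ≤ s (i + 1) - s (i + 2)) {a b u w : ℕ} (hba : b ≤ a)
    (huw : u ≤ w) : s b - s a ≤ s (b + u) - s (a + w) := by
  have hshift : s b - s (b + w) ≤ s a - s (a + w) := monotone_sub_shift hconv w hba
  have hlow : s (b + w) ≤ s (b + u) := antitone_nat_of_succ_le hmono (Nat.add_le_add_left huw b)
  linarith

end ScoringVector

section Lists

variable {α : Type*} [BEq α] [LawfulBEq α]

theorem idxOf_filter (p : α → Bool) {c : α} (hc : p c) {l : List α} (hcl : c ∈ l) :
    (l.filter p).idxOf c = (l.take (l.idxOf c)).countP p := by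
  induction l with
  | nil => simp at hcl
  | cons a l ih =>
    by_cases hac : a = c
    · subst hac
      simp [List.filter_cons_of_pos hc]
    · have hcl : c ∈ l := (List.mem_cons.1 hcl).resolve_left (Ne.symm hac)
      rw [List.idxOf_cons_ne _ (by simpa using hac), List.take_succ_cons, List.countP_cons,
        List.filter_cons, ← ih hcl]
      cases p a <;> simp [List.idxOf_cons_ne _ (by simpa using hac)]

theorem idxOf_eq_idxOf_filter_add (p : α → Bool) {c : α} (hc : p c) {l : List α}
    (hcl : c ∈ l) :
    l.idxOf c = (l.filter p).idxOf c + (l.take (l.idxOf c)).countP (fun a => !p a) := by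
  have hlen : (l.take (l.idxOf c)).length = l.idxOf c :=
    List.length_take_of_le List.idxOf_le_length
  rw [idxOf_filter p hc hcl]
  conv_lhs => rw [← hlen, List.length_eq_countP_add_countP p]
  simp

end Lists

section InsertBelow

variable {x z : ℕ} {ys v : List ℕ}

theorem insertBelow_append_cons {l₁ l₂ : List ℕ} (hx : x ∉ l₁) :
    insertBelow x ys (l₁ ++ x :: l₂) = l₁ ++ x :: (ys ++ l₂) := by
  have hne : ∀ c ∈ l₁, decide (c ≠ x) = true := fun c hc => by
    simpa using ne_of_mem_of_not_mem hc hx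
  rw [insertBelow, List.takeWhile_append_of_pos hne, List.dropWhile_append_of_pos hne]
  simp

theorem idxOf_insertBelow_self (hx : x ∈ v) : (insertBelow x ys v).idxOf x = v.idxOf x := by
  obtain ⟨l₁, l₂, rfl, hxl₁⟩ := List.eq_append_cons_of_mem hx
  simp [insertBelow_append_cons hxl₁, List.idxOf_append_of_notMem hxl₁]

theorem idxOf_insertBelow_of_lt (hx : x ∈ v) (hz : v.idxOf z < v.idxOf x) :
    (insertBelow x ys v).idxOf z = v.idxOf z := by
  obtain ⟨l₁, l₂, rfl, hxl₁⟩ := List.eq_append_cons_of_mem hx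
  have hzl₁ : z ∈ l₁ := by
    by_contra hzl₁
    rw [List.idxOf_append_of_notMem hzl₁, List.idxOf_append_of_notMem hxl₁,
      List.idxOf_cons_self] at hz
    omega
  rw [insertBelow_append_cons hxl₁, List.idxOf_append_of_mem hzl₁,
    List.idxOf_append_of_mem hzl₁]

theorem idxOf_insertBelow_of_gt (hx : x ∈ v) (hzys : z ∉ ys) (hz : v.idxOf x < v.idxOf z) :
    (insertBelow x ys v).idxOf z = v.idxOf z + ys.length := by
  obtain ⟨l₁, l₂, rfl, hxl₁⟩ := List.eq_append_cons_of_mem hx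
  have hzl₁ : z ∉ l₁ := fun hzl₁ => by
    rw [List.idxOf_append_of_mem hzl₁, List.idxOf_append_of_notMem hxl₁] at hz
    have := List.idxOf_lt_length_of_mem hzl₁
    omega
  have hzx : z ≠ x := by rintro rfl; omega
  rw [insertBelow_append_cons hxl₁, List.idxOf_append_of_notMem hzl₁,
    List.idxOf_append_of_notMem hzl₁, List.idxOf_cons_ne _ (by simpa using hzx.symm),
    List.idxOf_cons_ne _ (by simpa using hzx.symm), List.idxOf_append_of_notMem hzys]
  omega

theorem idxOf_insertBelow_self_le (hx : x ∈ v) (hz : z ∉ v) :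
    (insertBelow x ys v).idxOf x ≤ (insertBelow x ys v).idxOf z := by
  obtain ⟨l₁, l₂, rfl, hxl₁⟩ := List.eq_append_cons_of_mem hx
  have hzl₁ : z ∉ l₁ := fun h => hz (List.mem_append_left _ h)
  rw [insertBelow_append_cons hxl₁, List.idxOf_append_of_notMem hxl₁,
    List.idxOf_append_of_notMem hzl₁]
  simp

theorem insertBelow_perm (hx : x ∈ v) : (insertBelow x ys v).Perm (v ++ ys) := by
  obtain ⟨l₁, l₂, rfl, hxl₁⟩ := List.eq_append_cons_of_mem hx
  rw [insertBelow_append_cons hxl₁, List.append_assoc, List.cons_append]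
  exact (List.perm_append_comm.cons x).append_left l₁

theorem filter_insertBelow (p : ℕ → Bool) (hx : x ∈ v) (hpx : p x)
    (hys : ∀ y ∈ ys, p y = false) : (insertBelow x ys v).filter p = v.filter p := by
  obtain ⟨l₁, l₂, rfl, hxl₁⟩ := List.eq_append_cons_of_mem hx
  rw [insertBelow_append_cons hxl₁]
  simpa [List.filter_append, List.filter_cons_of_pos hpx] using hys

end InsertBelow

section Scores

variable {s : ℕ → ℤ}

theorem sub_le_sub_insertBelow_filter (hmono : ∀ i, s (i + 1) ≤ s i)
    (hconv : ∀ i, s i - s (i + 1) ≤ s (i + 1) - s (i + 2)) (p : ℕ → Bool) {x z : ℕ}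
    {ys v' : List ℕ} (hv' : v'.Nodup) (hxv' : x ∈ v') (hzv' : z ∈ v') (hpx : p x) (hpz : p z)
    (hys : ∀ c ∈ v', p c = false → c ∈ ys) (hzys : z ∉ ys) :
    s ((insertBelow x ys (v'.filter p)).idxOf z) - s ((insertBelow x ys (v'.filter p)).idxOf x)
      ≤ s (v'.idxOf z) - s (v'.idxOf x) := by
  set v := v'.filter p
  have hxv : x ∈ v := List.mem_filter.2 ⟨hxv', hpx⟩
  have hzv : z ∈ v := List.mem_filter.2 ⟨hzv', hpz⟩
  set u : ℕ → ℕ := fun c => (v'.take (v'.idxOf c)).countP (fun a => !p a)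
  have hu_le : ∀ c, u c ≤ ys.length := fun c => calc
    u c ≤ v'.countP (fun a => !p a) := (List.take_sublist _ _).countP_le
    _ = (v'.filter fun a => !p a).length := List.countP_eq_length_filter
    _ ≤ ys.length := ((hv'.filter _).subperm fun a ha => by
      simp only [List.mem_filter, Bool.not_eq_eq_eq_not, Bool.not_true] at ha
      exact hys a ha.1 ha.2).length_le
  rw [idxOf_insertBelow_self hxv, idxOf_eq_idxOf_filter_add p hpx hxv',
    idxOf_eq_idxOf_filter_add p hpz hzv']
  rcases lt_trichotomy (v.idxOf z) (v.idxOf x) with hlt | heq | hgt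
  · have hux : u z ≤ u x := by
      rcases le_total (v'.idxOf z) (v'.idxOf x) with h | h
      · exact (List.take_sublist_take_left h).countP_le
      · have : v.idxOf x ≤ v.idxOf z := by
          rw [idxOf_filter p hpx hxv', idxOf_filter p hpz hzv']
          exact (List.take_sublist_take_left h).countP_le
        omega
    rw [idxOf_insertBelow_of_lt hxv hlt]
    exact sub_le_sub_of_shift hmono hconv hlt.le hux
  · obtain rfl := (List.idxOf_inj hzv).1 heq
    simp [idxOf_insertBelow_self hxv]
  · have hanti := antitone_nat_of_succ_le hmono
    have hz : s (v.idxOf z + ys.length) ≤ s (v.idxOf z + u z) :=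
      hanti (Nat.add_le_add_left (hu_le z) _)
    have hx : s (v.idxOf x + u x) ≤ s (v.idxOf x) := hanti (Nat.le_add_right _ _)
    rw [idxOf_insertBelow_of_gt hxv hzys hgt]
    linarith

theorem score_insertProfile_restrict_sub_le (hmono : ∀ i, s (i + 1) ≤ s i)
    (hconv : ∀ i, s i - s (i + 1) ≤ s (i + 1) - s (i + 2)) {X Y : Finset ℕ}
    (hXY : Disjoint X Y) {x z : ℕ} (hx : x ∈ X) (hz : z ∈ X) {ys : List ℕ}
    (hys : ∀ c, c ∈ ys ↔ c ∈ Y) {P' : Profile} (hP' : IsProfile (X ∪ Y) P') :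
    score s (insertProfile x ys (restrict X P')) z - score s (insertProfile x ys (restrict X P')) x
      ≤ score s P' z - score s P' x := by
  have hvote : ∀ v' ∈ P',
      s ((insertBelow x ys (v'.filter fun c => decide (c ∈ X))).idxOf z) + s (v'.idxOf x)
        ≤ s ((insertBelow x ys (v'.filter fun c => decide (c ∈ X))).idxOf x)
          + s (v'.idxOf z) := fun v' hv' => by
    obtain ⟨hnd', hmem'⟩ := hP' v' hv'
    have := sub_le_sub_insertBelow_filter hmono hconv (fun c => decide (c ∈ X)) hnd'
      ((hmem' x).2 (Finset.mem_union_left _ hx)) ((hmem' z).2 (Finset.mem_union_left _ hz))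
      (by simpa using hx) (by simpa using hz)
      (fun c hc hcX => (hys c).2 <|
        (Finset.mem_union.1 ((hmem' c).1 hc)).resolve_left (by simpa using hcX))
      (fun hzys => Finset.disjoint_left.1 hXY hz ((hys z).1 hzys))
    linarith
  have := List.sum_le_sum hvote
  simp only [List.sum_map_add] at this
  simp only [score, insertProfile, restrict, List.map_map, Function.comp_def]
  linarith

theorem score_insertProfile_le_self (hmono : ∀ i, s (i + 1) ≤ s i) {X : Finset ℕ} {x z : ℕ}
    (hx : x ∈ X) (hz : z ∉ X) {P : Profile} (hP : IsProfile X P) (ys : List ℕ) :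
    score s (insertProfile x ys P) z ≤ score s (insertProfile x ys P) x := by
  simp only [score, insertProfile, List.map_map]
  refine List.sum_le_sum fun v hv => antitone_nat_of_succ_le hmono ?_
  exact idxOf_insertBelow_self_le (((hP v hv).2 x).2 hx) fun hzv => hz (((hP v hv).2 z).1 hzv)

end Scores

section Extension

variable {X Y : Finset ℕ} {x : ℕ} {ys : List ℕ}

theorem isProfile_insertProfile (hXY : Disjoint X Y) (hx : x ∈ X) (hnd : ys.Nodup)
    (hys : ∀ c, c ∈ ys ↔ c ∈ Y) {P : Profile} (hP : IsProfile X P) :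
    IsProfile (X ∪ Y) (insertProfile x ys P) := by
  simp only [IsProfile, insertProfile, List.mem_map, forall_exists_index, and_imp,
    forall_apply_eq_imp_iff₂]
  intro v hv
  obtain ⟨hvnd, hvmem⟩ := hP v hv
  have hperm := insertBelow_perm (ys := ys) ((hvmem x).2 hx)
  refine ⟨hperm.nodup_iff.2 (List.nodup_append.2 ⟨hvnd, hnd, ?_⟩), fun c => ?_⟩
  · rintro a ha b hb rfl
    exact Finset.disjoint_left.1 hXY ((hvmem a).1 ha) ((hys a).1 hb)
  · rw [hperm.mem_iff, List.mem_append, hvmem, hys, Finset.mem_union]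

theorem restrict_insertProfile (hXY : Disjoint X Y) (hx : x ∈ X) (hys : ∀ c, c ∈ ys ↔ c ∈ Y)
    {P : Profile} (hP : IsProfile X P) : restrict X (insertProfile x ys P) = P := by
  simp only [restrict, insertProfile, List.map_map]
  refine (List.map_congr_left fun v hv => ?_).trans (List.map_id P)
  obtain ⟨-, hvmem⟩ := hP v hv
  rw [Function.comp_apply, filter_insertBelow _ ((hvmem x).2 hx) (by simpa using hx)
    fun y hy => by simpa using Finset.disjoint_right.1 hXY ((hys y).1 hy)]
  exact List.filter_eq_self.2 fun c hc => by simpa using (hvmem c).1 hc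

end Extension

theorem stmt_4_general (s : ℕ → ℤ) (hmono : ∀ i, s (i + 1) ≤ s i)
    (hconv : ∀ i, s i - s (i + 1) ≤ s (i + 1) - s (i + 2))
    (X Y : Finset ℕ) (hXY : Disjoint X Y)
    (P : Profile) (hP : IsProfile X P) (xstar : ℕ) (hx : xstar ∈ X)
    (ys : List ℕ) (hnd : ys.Nodup) (hys : ∀ c, c ∈ ys ↔ c ∈ Y) :
    (∃ P', IsProfile (X ∪ Y) P' ∧ Extends X P' P ∧
        ∀ z ∈ X ∪ Y, score s P' z ≤ score s P' xstar) ↔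
      (∀ z ∈ X ∪ Y,
        score s (insertProfile xstar ys P) z ≤ score s (insertProfile xstar ys P) xstar) := by
  constructor
  · rintro ⟨P', hP', rfl, hwin⟩ z hz
    rcases Finset.mem_union.1 hz with hzX | hzY
    · have := score_insertProfile_restrict_sub_le hmono hconv hXY hx hzX hys hP'
      linarith [hwin z hz]
    · exact score_insertProfile_le_self hmono hx (Finset.disjoint_right.1 hXY hzY) hP ys
  · intro hwin
    exact ⟨_, isProfile_insertProfile hXY hx hnd hys hP, restrict_insertProfile hXY hx hys hP,
      hwin⟩

/-- For a scoring vector with convex differences toward the top, `xstar` is a possible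
cowinner w.r.t. adding the candidates of `Y` iff `xstar` is a cowinner in the specific
extension obtained by inserting the new candidates right below `xstar` in every vote. -/
theorem stmt_4 (s : ℕ → ℤ) (hmono : ∀ i, s (i + 1) ≤ s i)
    (hconv : ∀ i, s i - s (i + 1) ≤ s (i + 1) - s (i + 2))
    (X Y : Finset ℕ) (hXY : Disjoint X Y) (k : ℕ) (hcard : Y.card = k)
    (P : Profile) (hP : IsProfile X P) (xstar : ℕ) (hx : xstar ∈ X)
    (ys : List ℕ) (hnd : ys.Nodup) (hys : ∀ c, c ∈ ys ↔ c ∈ Y) :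
    (∃ P', IsProfile (X ∪ Y) P' ∧ Extends X P' P ∧
        ∀ z ∈ X ∪ Y, score s P' z ≤ score s P' xstar) ↔
      (∀ z ∈ X ∪ Y,
        score s (insertProfile xstar ys P) z ≤ score s (insertProfile xstar ys P) xstar) :=
  stmt_4_general s hmono hconv X Y hXY P hP xstar hx ys hnd hys

end PcWNC
end

section
/- In a Borda possible-cowinner situation with addition of new candidates, if candidate x is dominated by some candidate z (i.e., every vote in P ranks z above x), then x is not a possible cowinner for Borda with respect to the addition of any number k of new candidates. -/
namespace List

variable {α : Type*}

theorem countP_lt_countP {l : List α} {p q : α → Bool} (hpq : ∀ w ∈ l, p w → q w)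
    {a : α} (ha : a ∈ l) (hqa : q a) (hpa : ¬ p a) : l.countP p < l.countP q := by
  induction l with
  | nil => cases ha
  | cons b t ih =>
    have hpq_t : ∀ w ∈ t, p w → q w := fun w hw => hpq w (mem_cons_of_mem b hw)
    have hb : (if p b then 1 else 0) ≤ if q b then 1 else 0 := by
      have := hpq b mem_cons_self
      split_ifs <;> simp_all
    rw [countP_cons, countP_cons]
    rcases mem_cons.1 ha with rfl | ha
    · have := countP_mono_left hpq_t
      rw [if_neg hpa, if_pos hqa]
      omega
    · have := ih hpq_t ha
      omega

theorem idxOf_lt_idxOf_of_filter [BEq α] [LawfulBEq α] {q : α → Bool} {a b : α} (hqb : q b) :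
    ∀ {l : List α}, (l.filter q).idxOf a < (l.filter q).idxOf b → l.idxOf a < l.idxOf b
  | [], h => by simp at h
  | c :: t, h => by
    by_cases hca : c = a
    · subst hca
      have hcb : c ≠ b := by rintro rfl; exact lt_irrefl _ h
      rw [idxOf_cons_self, idxOf_cons_ne _ hcb]
      exact Nat.succ_pos _
    by_cases hcb : c = b
    · subst hcb
      rw [filter_cons_of_pos hqb, idxOf_cons_self] at h
      exact absurd h (Nat.not_lt_zero _)
    rw [idxOf_cons_ne _ hca, idxOf_cons_ne _ hcb]
    refine Nat.succ_lt_succ (idxOf_lt_idxOf_of_filter hqb ?_)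
    cases hqc : q c
    · rwa [filter_cons_of_neg (by simp [hqc])] at h
    · rwa [filter_cons_of_pos hqc, idxOf_cons_ne _ hca, idxOf_cons_ne _ hcb,
        Nat.succ_lt_succ_iff] at h

end List

namespace PcWNC

theorem borda_lt_borda_of_forall_idxOf_lt {P : Profile} (hne : P ≠ []) {x z : ℕ}
    (hx : ∀ v ∈ P, x ∈ v) (hzx : ∀ v ∈ P, v.idxOf z < v.idxOf x) :
    borda P x < borda P z := by
  have hvote : ∀ v ∈ P, v.countP (fun w => decide (v.idxOf x < v.idxOf w)) <
      v.countP (fun w => decide (v.idxOf z < v.idxOf w)) := fun v hv =>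
    List.countP_lt_countP
      (fun w _ hw => decide_eq_true ((hzx v hv).trans (of_decide_eq_true hw)))
      (hx v hv) (decide_eq_true (hzx v hv)) (by simp)
  obtain ⟨v, hv⟩ := List.exists_mem_of_ne_nil P hne
  exact List.sum_lt_sum _ _ (fun v hv => (hvote v hv).le) ⟨v, hv, hvote v hv⟩

theorem idxOf_lt_idxOf_of_extends {X : Finset ℕ} {P P' : Profile} (hext : Extends X P' P)
    {x z : ℕ} (hxX : x ∈ X) (hdom : ∀ v ∈ P, v.idxOf z < v.idxOf x) :
    ∀ v' ∈ P', v'.idxOf z < v'.idxOf x := by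
  intro v' hv'
  have hv : v'.filter (fun c => decide (c ∈ X)) ∈ P := by
    rw [← hext]
    exact List.mem_map_of_mem hv'
  exact List.idxOf_lt_idxOf_of_filter (q := fun c => decide (c ∈ X))
    (decide_eq_true hxX) (hdom _ hv)

theorem stmt_7_general (X : Finset ℕ) (P : Profile) (hne : P ≠ [])
    (x z : ℕ) (hxX : x ∈ X) (hzX : z ∈ X)
    (hdom : ∀ v ∈ P, v.idxOf z < v.idxOf x) (k : ℕ) :
    ¬ ∃ Y : Finset ℕ, Disjoint X Y ∧ Y.card = k ∧
        ∃ P', IsProfile (X ∪ Y) P' ∧ Extends X P' P ∧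
          ∀ w ∈ X ∪ Y, borda P' w ≤ borda P' x := by
  rintro ⟨Y, -, -, P', hP', hext, hwin⟩
  have hx : ∀ v ∈ P', x ∈ v := fun v hv => ((hP' v hv).2 x).2 (Finset.mem_union_left Y hxX)
  have hP'ne : P' ≠ [] := by
    rintro rfl
    exact hne hext.symm
  exact (hwin z (Finset.mem_union_left Y hzX)).not_gt
    (borda_lt_borda_of_forall_idxOf_lt hP'ne hx (idxOf_lt_idxOf_of_extends hext hxX hdom))

/-- If `x` is dominated by `z` in `P`, then `x` is not a possible Borda cowinner
with respect to the addition of any number of new candidates. -/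
theorem stmt_7 (X : Finset ℕ) (P : Profile) (hP : IsProfile X P) (hne : P ≠ [])
    (x z : ℕ) (hxX : x ∈ X) (hzX : z ∈ X) (hzx : z ≠ x)
    (hdom : ∀ v ∈ P, v.idxOf z < v.idxOf x) (k : ℕ) :
    ¬ ∃ Y : Finset ℕ, Disjoint X Y ∧ Y.card = k ∧
        ∃ P', IsProfile (X ∪ Y) P' ∧ Extends X P' P ∧
          ∀ w ∈ X ∪ Y, borda P' w ≤ borda P' x :=
  stmt_7_general X P hne x z hxX hzX hdom k

end PcWNC
end

section
/- For the K-approval rule, a candidate x* is a possible cowinner with respect to the addition of an unbounded number of new candidates (i.e., there exists some k and an extension of the profile by k new candidates making x* a cowinner) if and only if S_K(x*, P) ≥ 1, i.e., at least one vote ranks x* within the top K positions. -/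
/-! A possible cowinner scores at least as much as the top candidate of the first vote, so it is
approved somewhere; deleting the new candidates from a vote can only move `x` up, so `x` is
already approved in `P`.

Conversely, if `x` is approved in some vote of the `n` votes, add `K n` new candidates. Every vote
not approving `x` gets its own block of `K` new candidates on top, and the other votes keep their
top `K` when `K ≤ |X|`. Then an old candidate is approved only in votes that also approve `x`,
and a new one in at most one vote. If `|X| ≤ K`, then `x` is approved in every vote of `P`
and no candidate needs to be added. -/

namespace PcWNC

section ListLemmas

variable {α : Type*}

theorem mem_take_filter {l : List α} {p : α → Bool} {K : ℕ} {x : α} (hx : x ∈ l.take K)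
    (hp : p x) : x ∈ (l.filter p).take K := by
  have hx' : x ∈ (l.take K).filter p := List.mem_filter.mpr ⟨hx, hp⟩
  rw [← List.take_append_drop K l, List.filter_append, List.take_append,
    List.take_of_length_le ((List.length_filter_le _ _).trans (List.length_take_le _ _))]
  exact List.mem_append_left _ hx'

theorem mem_and_lt_of_mem_zipIdx {l : List α} {a : α} {i : ℕ} (h : (a, i) ∈ l.zipIdx) :
    a ∈ l ∧ i < l.length := by
  obtain ⟨-, hi, ha⟩ := List.mem_zipIdx h
  rw [zero_add] at hi
  exact ⟨ha ▸ List.getElem_mem _, hi⟩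

theorem countP_zipIdx_le_one {l : List α} {p : α × ℕ → Bool} {j : ℕ}
    (h : ∀ q ∈ l.zipIdx, p q → q.2 = j) : l.zipIdx.countP p ≤ 1 :=
  calc l.zipIdx.countP p ≤ l.zipIdx.countP (fun q => q.2 == j) :=
        List.countP_mono_left fun q hq hpq => by simpa using h q hq hpq
    _ = (List.range' 0 l.length).count j := by
        rw [← List.zipIdx_map_snd, List.count_eq_countP, List.countP_map]; rfl
    _ ≤ 1 := List.nodup_iff_count_le_one.mp List.nodup_range' j

end ListLemmas

namespace IsVote

variable {X Y : Finset ℕ} {v w : List ℕ}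

theorem length_eq_card (h : IsVote X v) : v.length = X.card := by
  rw [← List.toFinset_card_of_nodup h.1]
  congr 1
  ext c
  simpa using h.2 c

theorem perm (h : IsVote X v) (hvw : v.Perm w) : IsVote X w :=
  ⟨hvw.nodup_iff.mp h.1, fun c => hvw.mem_iff.symm.trans (h.2 c)⟩

theorem append_s8 (hv : IsVote X v) (hw : IsVote Y w) (hXY : Disjoint X Y) :
    IsVote (X ∪ Y) (v ++ w) := by
  refine ⟨List.nodup_append.mpr ⟨hv.1, hw.1, ?_⟩, fun c => ?_⟩
  · rintro a ha b hb rfl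
    exact Finset.disjoint_left.mp hXY ((hv.2 a).mp ha) ((hw.2 a).mp hb)
  · rw [List.mem_append, Finset.mem_union, hv.2, hw.2]

theorem filter_mem_self (h : IsVote X v) : v.filter (fun c => decide (c ∈ X)) = v :=
  List.filter_eq_self.mpr fun c hc => decide_eq_true ((h.2 c).mp hc)

theorem filter_mem_eq_nil (h : IsVote Y w) (hXY : Disjoint X Y) :
    w.filter (fun c => decide (c ∈ X)) = [] :=
  List.filter_eq_nil_iff.mpr fun c hc =>
    by simpa using Finset.disjoint_right.mp hXY ((h.2 c).mp hc)

end IsVote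

theorem isVote_range' (M N : ℕ) : IsVote (Finset.Ico M (M + N)) (List.range' M N) :=
  ⟨List.nodup_range', fun c => by rw [List.mem_range'_1, Finset.mem_Ico]⟩

theorem restrict_eq_self {X : Finset ℕ} {P : Profile} (hP : IsProfile X P) :
    restrict X P = P :=
  (List.map_congr_left fun v hv => (hP v hv).filter_mem_self).trans (List.map_id P)


section Approval

variable {K : ℕ} {X : Finset ℕ} {P : Profile} {x : ℕ}

theorem approval_le_approval_restrict_s8 (hx : x ∈ X) :
    approval K P x ≤ approval K (restrict X P) x := by
  unfold approval restrict
  rw [List.countP_map]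
  refine List.countP_mono_left fun v _ hv => ?_
  simp only [Function.comp_apply, decide_eq_true_eq] at hv ⊢
  exact mem_take_filter hv (decide_eq_true hx)

theorem one_le_approval_of_forall_le (hK : 1 ≤ K) (hP : IsProfile X P) (hne : P ≠ [])
    (hx : x ∈ X) (hwin : ∀ z ∈ X, approval K P z ≤ approval K P x) :
    1 ≤ approval K P x := by
  obtain ⟨v, P₀, rfl⟩ := List.exists_cons_of_ne_nil hne
  have hv := hP v List.mem_cons_self
  obtain ⟨c, v₀, rfl⟩ := List.exists_cons_of_ne_nil (List.ne_nil_of_mem ((hv.2 x).mpr hx))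
  have hc : 1 ≤ approval K ((c :: v₀) :: P₀) c := by
    obtain ⟨K', rfl⟩ := Nat.exists_eq_add_of_le' hK
    exact List.countP_pos_iff.mpr ⟨_, List.mem_cons_self, by simp⟩
  exact hc.trans (hwin c ((hv.2 c).mp List.mem_cons_self))

theorem approval_le_of_card_le (hP : IsProfile X P) (hXK : X.card ≤ K) (hx : x ∈ X)
    (z : ℕ) : approval K P z ≤ approval K P x := by
  have hall : approval K P x = P.length := List.countP_eq_length.mpr fun v hv => by
    rw [List.take_of_length_le ((hP v hv).length_eq_card.trans_le hXK)]
    simpa using ((hP v hv).2 x).mpr hx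
  exact hall ▸ List.countP_le_length

end Approval

def IsApprovalCowinner (K : ℕ) (Z : Finset ℕ) (P : Profile) (x : ℕ) : Prop :=
  ∀ z ∈ Z, approval K P z ≤ approval K P x

def IsPossibleApprovalCowinner (K : ℕ) (X : Finset ℕ) (P : Profile) (x : ℕ) : Prop :=
  ∃ Y : Finset ℕ, Disjoint X Y ∧
    ∃ P', IsProfile (X ∪ Y) P' ∧ Extends X P' P ∧ IsApprovalCowinner K (X ∪ Y) P' x

theorem IsPossibleApprovalCowinner.one_le_approval {K : ℕ} {X : Finset ℕ} {P : Profile}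
    {x : ℕ} (hK : 1 ≤ K) (hne : P ≠ []) (hx : x ∈ X)
    (h : IsPossibleApprovalCowinner K X P x) : 1 ≤ approval K P x := by
  obtain ⟨Y, -, P', hP', rfl, hwin⟩ := h
  have hne' : P' ≠ [] := by rintro rfl; exact hne rfl
  calc 1 ≤ approval K P' x :=
        one_le_approval_of_forall_le hK hP' hne' (Finset.mem_union_left Y hx) hwin
    _ ≤ approval K (restrict X P') x := approval_le_approval_restrict_s8 hx


theorem disjoint_Ico_of_forall_lt {X : Finset ℕ} {M : ℕ} (hM : ∀ c ∈ X, c < M) (N : ℕ) :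
    Disjoint X (Finset.Ico M (M + N)) :=
  Finset.disjoint_left.mpr fun c hc hc' => (Finset.mem_Ico.mp hc').1.not_gt (hM c hc)

section Extension

variable (K M n x : ℕ)

/-- The new candidates are `M, …, M + K n - 1`. A vote approving `x` ranks them all at the bottom;
the `i`-th vote not approving `x` puts the `i`-th block `M + K i, …, M + K i + K - 1` on top. -/
def extendVote (v : List ℕ) (i : ℕ) : List ℕ :=
  if x ∈ v.take K then v ++ List.range' M (K * n)
  else (List.range' M (K * n)).rotate (K * i) ++ v

def extendProfile (P : Profile) : Profile :=
  P.zipIdx.map fun q => extendVote K M P.length x q.1 q.2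

variable {K M n x} {X : Finset ℕ} {v : List ℕ} {i : ℕ}

theorem isVote_extendVote (hv : IsVote X v) (hM : ∀ c ∈ X, c < M) :
    IsVote (X ∪ Finset.Ico M (M + K * n)) (extendVote K M n x v i) := by
  have happ := hv.append_s8 (isVote_range' M (K * n)) (disjoint_Ico_of_forall_lt hM _)
  unfold extendVote
  split_ifs
  · exact happ
  · exact happ.perm
      (List.perm_append_comm.trans ((List.rotate_perm _ _).symm.append_right v))

theorem filter_extendVote (hv : IsVote X v) (hM : ∀ c ∈ X, c < M) :
    (extendVote K M n x v i).filter (fun c => decide (c ∈ X)) = v := by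
  have hY := isVote_range' M (K * n)
  have hdisj := disjoint_Ico_of_forall_lt hM (K * n)
  unfold extendVote
  split_ifs
  · rw [List.filter_append, hv.filter_mem_self, hY.filter_mem_eq_nil hdisj, List.append_nil]
  · rw [List.filter_append, hv.filter_mem_self,
      (hY.perm (List.rotate_perm _ _).symm).filter_mem_eq_nil hdisj, List.nil_append]

theorem take_extendVote (hv : K ≤ v.length) (hi : i < n) :
    (extendVote K M n x v i).take K =
      if x ∈ v.take K then v.take K else List.range' (M + K * i) K := by
  have hKi : K * i + K ≤ K * n := by simpa [Nat.mul_succ] using Nat.mul_le_mul_left K hi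
  unfold extendVote
  split_ifs
  · exact List.take_append_of_le_length hv
  · rw [List.rotate_eq_drop_append_take (by simp; omega), List.append_assoc,
      List.take_append_of_le_length (by simp; omega), List.drop_range',
      List.take_range'_of_length_ge (by omega)]
    simp

variable {P : Profile}

theorem isProfile_extendProfile (hP : IsProfile X P) (hM : ∀ c ∈ X, c < M) :
    IsProfile (X ∪ Finset.Ico M (M + K * P.length)) (extendProfile K M x P) := by
  intro w hw
  obtain ⟨⟨v, i⟩, hvi, rfl⟩ := List.mem_map.mp hw
  exact isVote_extendVote (hP v (mem_and_lt_of_mem_zipIdx hvi).1) hM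

theorem extends_extendProfile (hP : IsProfile X P) (hM : ∀ c ∈ X, c < M) :
    Extends X (extendProfile K M x P) P := by
  unfold Extends restrict extendProfile
  rw [List.map_map]
  refine (List.map_congr_left fun q hq => ?_).trans (List.zipIdx_map_fst 0 P)
  exact filter_extendVote (hP q.1 (mem_and_lt_of_mem_zipIdx hq).1) hM

theorem approval_extendProfile_of_mem (hP : IsProfile X P) (hM : ∀ c ∈ X, c < M)
    (hKX : K ≤ X.card) {z : ℕ} (hz : z ∈ X) :
    approval K (extendProfile K M x P) z =
      P.countP fun v => x ∈ v.take K ∧ z ∈ v.take K := by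
  unfold approval extendProfile
  conv_rhs => rw [← List.zipIdx_map_fst 0 P]
  rw [List.countP_map, List.countP_map]
  refine List.countP_congr fun q hq => ?_
  obtain ⟨hv, hi⟩ := mem_and_lt_of_mem_zipIdx hq
  simp only [Function.comp_apply, decide_eq_true_eq]
  rw [take_extendVote ((hP _ hv).length_eq_card ▸ hKX) hi]
  split_ifs with hxv
  · simp [hxv]
  · simp only [hxv, false_and, iff_false, List.mem_range'_1, not_and, not_lt]
    exact fun h => absurd ((Nat.le_add_right M _).trans h) (hM z hz).not_ge

theorem approval_extendProfile_le_one (hP : IsProfile X P) (hM : ∀ c ∈ X, c < M)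
    (hKX : K ≤ X.card) {y : ℕ} (hy : M ≤ y) : approval K (extendProfile K M x P) y ≤ 1 := by
  unfold approval extendProfile
  rw [List.countP_map]
  refine countP_zipIdx_le_one (j := (y - M) / K) fun q hq hyq => ?_
  obtain ⟨hv, hi⟩ := mem_and_lt_of_mem_zipIdx hq
  simp only [Function.comp_apply, decide_eq_true_eq] at hyq
  rw [take_extendVote ((hP _ hv).length_eq_card ▸ hKX) hi] at hyq
  split_ifs at hyq
  · exact absurd (hM y (((hP _ hv).2 y).mp (List.mem_of_mem_take hyq))) hy.not_gt
  · rw [List.mem_range'_1] at hyq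
    exact (Nat.div_eq_of_lt_le (by rw [mul_comm]; omega)
      (by rw [Nat.succ_mul, mul_comm]; omega)).symm

theorem isApprovalCowinner_extendProfile (hP : IsProfile X P) (hM : ∀ c ∈ X, c < M)
    (hKX : K ≤ X.card) (hx : x ∈ X) (hpos : 1 ≤ approval K P x) :
    IsApprovalCowinner K (X ∪ Finset.Ico M (M + K * P.length)) (extendProfile K M x P) x := by
  have hxx : approval K (extendProfile K M x P) x = approval K P x := by
    rw [approval_extendProfile_of_mem hP hM hKX hx]
    simp only [and_self, approval]
  intro z hz
  rw [hxx]
  rcases Finset.mem_union.mp hz with hz | hz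
  · rw [approval_extendProfile_of_mem hP hM hKX hz]
    refine List.countP_mono_left fun v _ h => ?_
    simp only [decide_eq_true_eq] at h ⊢
    exact h.1
  · exact (approval_extendProfile_le_one hP hM hKX (Finset.mem_Ico.mp hz).1).trans hpos

end Extension

theorem isPossibleApprovalCowinner_of_one_le_approval {K : ℕ} {X : Finset ℕ} {P : Profile}
    {x : ℕ} (hP : IsProfile X P) (hx : x ∈ X) (hpos : 1 ≤ approval K P x) :
    IsPossibleApprovalCowinner K X P x := by
  rcases le_total X.card K with hXK | hKX
  · exact ⟨∅, Finset.disjoint_empty_right X, P, by simpa using hP, restrict_eq_self hP,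
      fun z _ => approval_le_of_card_le hP hXK hx z⟩
  · have hM : ∀ c ∈ X, c < X.sup id + 1 := fun c hc =>
      Nat.lt_succ_of_le (Finset.le_sup (f := id) hc)
    exact ⟨_, disjoint_Ico_of_forall_lt hM _, _, isProfile_extendProfile hP hM,
      extends_extendProfile hP hM, isApprovalCowinner_extendProfile hP hM hKX hx hpos⟩

theorem isPossibleApprovalCowinner_iff {K : ℕ} {X : Finset ℕ} {P : Profile} {x : ℕ}
    (hK : 1 ≤ K) (hP : IsProfile X P) (hne : P ≠ []) (hx : x ∈ X) :
    IsPossibleApprovalCowinner K X P x ↔ 1 ≤ approval K P x :=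
  ⟨IsPossibleApprovalCowinner.one_le_approval hK hne hx,
    isPossibleApprovalCowinner_of_one_le_approval hP hx⟩

/-- For `K`-approval with an unbounded number of new candidates, `xstar` is a possible
cowinner iff at least one vote ranks it within the top `K` positions. -/
theorem stmt_8 (K : ℕ) (hK : 1 ≤ K) (X : Finset ℕ) (P : Profile) (hP : IsProfile X P)
    (hne : P ≠ []) (xstar : ℕ) (hx : xstar ∈ X) :
    (∃ k, ∃ Y : Finset ℕ, Disjoint X Y ∧ Y.card = k ∧
      ∃ P', IsProfile (X ∪ Y) P' ∧ Extends X P' P ∧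
        ∀ z ∈ X ∪ Y, approval K P' z ≤ approval K P' xstar) ↔
      1 ≤ approval K P xstar := by
  rw [← isPossibleApprovalCowinner_iff hK hP hne hx]
  constructor
  · rintro ⟨-, Y, hXY, -, P', hP', hext, hwin⟩
    exact ⟨Y, hXY, P', hP', hext, hwin⟩
  · rintro ⟨Y, hXY, P', hP', hext, hwin⟩
    exact ⟨_, Y, hXY, rfl, P', hP', hext, hwin⟩

end PcWNC
end
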